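/- arXiv:1207.6850 — 6 statements merged into one kernel-verified Lean document; each statement's English description precedes it below -/
import Mathlib

section
/- For every positive integer n and every nonnegative integer i, the number of inversion sequences of length n with exactly i descents equals the number of permutations of {1,…,n} with exactly i descents (i.e., equals the Eulerian number A(n, i+1)). Precisely: #{ r = (r_1,…,r_n) : r_k ∈ {0,…,n−k} for all k, and #{k ∈ {1,…,n−1} : r_k > r_{k+1}} = i } = #{ π a permutation of {1,…,n} : #{k ∈ {1,…,n−1} : π(k) > π(k+1)} = i }. -/
/-- The generator vectors of the s-lecture hall parallelepiped: `lhVec s j` has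
`i`-th coordinate `s i` for `i ≥ j` and `0` for `i < j`. -/
def lhVec {n : ℕ} (s : Fin n → ℕ) (j : Fin n) : Fin n → ℝ :=
  fun i => if j ≤ i then (s i : ℝ) else 0

/-- The s-lecture hall parallelepiped: the half-open parallelepiped generated by
the vectors `lhVec s j`. -/
def lhPar {n : ℕ} (s : Fin n → ℕ) : Set (Fin n → ℝ) :=
  {x | ∃ c : Fin n → ℝ, (∀ j, 0 ≤ c j ∧ c j < 1) ∧ x = ∑ j, c j • lhVec s j}

/-- `lhEll S i` is the number of lattice points of `S ⊆ ℝ^N` whose last coordinate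
equals `i`. -/
noncomputable def lhEll {N : ℕ} (S : Set (Fin N → ℝ)) (i : ℕ) : ℕ :=
  Set.ncard {x : Fin N → ℤ | (fun k => (x k : ℝ)) ∈ S ∧
    ∀ j : Fin N, (j : ℕ) = N - 1 → x j = (i : ℤ)}

/-- The number of s-descents of `r`: indices `i` with `r i / s i > r (i+1) / s (i+1)`. -/
noncomputable def sDes {N : ℕ} (s : Fin N → ℕ) (r : Fin N → ℤ) : ℕ :=
  Set.ncard {i : Fin N | ∃ h : (i : ℕ) + 1 < N,
    (r i : ℚ) / (s i : ℚ) > (r ⟨(i : ℕ) + 1, h⟩ : ℚ) / (s ⟨(i : ℕ) + 1, h⟩ : ℚ)}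

/-- The number of s-ascents of `r`: indices `i` with `r i / s i < r (i+1) / s (i+1)`. -/
noncomputable def sAsc {N : ℕ} (s : Fin N → ℕ) (r : Fin N → ℤ) : ℕ :=
  Set.ncard {i : Fin N | ∃ h : (i : ℕ) + 1 < N,
    (r i : ℚ) / (s i : ℚ) < (r ⟨(i : ℕ) + 1, h⟩ : ℚ) / (s ⟨(i : ℕ) + 1, h⟩ : ℚ)}

/-- The number of (regular) descents of `r`: indices `i` with `r i > r (i+1)`. -/
noncomputable def rDes {N : ℕ} (r : Fin N → ℤ) : ℕ :=
  Set.ncard {i : Fin N | ∃ h : (i : ℕ) + 1 < N, r ⟨(i : ℕ) + 1, h⟩ < r i}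

/-- The number of (regular) ascents of `r`: indices `i` with `r i < r (i+1)`. -/
noncomputable def rAsc {N : ℕ} (r : Fin N → ℤ) : ℕ :=
  Set.ncard {i : Fin N | ∃ h : (i : ℕ) + 1 < N, r i < r ⟨(i : ℕ) + 1, h⟩}

/-- The number of s-descents of `r` at positions strictly before position `i`. -/
noncomputable def sDesLt {N : ℕ} (s : Fin N → ℕ) (r : Fin N → ℤ) (i : Fin N) : ℕ :=
  Set.ncard {j : Fin N | (j : ℕ) < (i : ℕ) ∧ ∃ h : (j : ℕ) + 1 < N,
    (r j : ℚ) / (s j : ℚ) > (r ⟨(j : ℕ) + 1, h⟩ : ℚ) / (s ⟨(j : ℕ) + 1, h⟩ : ℚ)}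

/-- `lhPsi s` is the set `Ψ_n = {0,…,s 0 − 1} × ⋯ × {0,…,s (n-1) − 1}`. -/
def lhPsi {n : ℕ} (s : Fin n → ℕ) : Set (Fin n → ℤ) :=
  {r | ∀ i, 0 ≤ r i ∧ r i < (s i : ℤ)}

/-- `inDilate s t lam` says that the lattice point `lam` satisfies
`0 ≤ lam 0 / s 0 ≤ lam 1 / s 1 ≤ ⋯ ≤ lam (n-1) / s (n-1) ≤ t`,
i.e. lies in the `t`-th dilate of the s-lecture hall polytope. -/
def inDilate {n : ℕ} (s : Fin n → ℕ) (t : ℕ) (lam : Fin n → ℤ) : Prop :=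
  (∀ i : Fin n, (i : ℕ) = 0 → 0 ≤ (lam i : ℚ) / (s i : ℚ)) ∧
  (∀ i : Fin n, ∀ h : (i : ℕ) + 1 < n,
    (lam i : ℚ) / (s i : ℚ) ≤ (lam ⟨(i : ℕ) + 1, h⟩ : ℚ) / (s ⟨(i : ℕ) + 1, h⟩ : ℚ)) ∧
  (∀ i : Fin n, (i : ℕ) = n - 1 → (lam i : ℚ) / (s i : ℚ) ≤ (t : ℚ))


noncomputable def lehmer {n : ℕ} (π : Equiv.Perm (Fin n)) : Fin n → ℤ :=
  fun k => ((Finset.univ.filter (fun j : Fin n => k < j ∧ π j < π k)).card : ℤ)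

lemma lehmer_mem {n : ℕ} (π : Equiv.Perm (Fin n)) (k : Fin n) :
    0 ≤ lehmer π k ∧ lehmer π k + ((k : ℕ) : ℤ) < (n : ℤ) := by
  refine ⟨Int.natCast_nonneg _, ?_⟩
  have h1 : (Finset.univ.filter (fun j : Fin n => k < j ∧ π j < π k)).card ≤ n - 1 - (k : ℕ) := by
    rw [← Fin.card_Ioi k]
    apply Finset.card_le_card
    intro j hj
    simp only [Finset.mem_filter] at hj
    exact Finset.mem_Ioi.mpr hj.2.1
  have h2 : (k : ℕ) < n := k.isLt
  unfold lehmer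
  push_cast
  omega

lemma lehmer_lt_iff {n : ℕ} (π : Equiv.Perm (Fin n)) (k : Fin n) (h : (k : ℕ) + 1 < n) :
    lehmer π ⟨(k : ℕ) + 1, h⟩ < lehmer π k ↔ π ⟨(k : ℕ) + 1, h⟩ < π k := by
  set k' : Fin n := ⟨(k : ℕ) + 1, h⟩ with hk'
  have hkk' : k < k' := by simp [hk', Fin.lt_def]
  constructor
  · intro hlt
    by_contra hc
    push_neg at hc
    have hne : π k ≠ π k' := fun he => (by simpa [Fin.ext_iff, hk'] using π.injective he)
    have hlt2 : π k < π k' := lt_of_le_of_ne hc hne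
    have hsub : (Finset.univ.filter (fun j : Fin n => k < j ∧ π j < π k)) ⊆
        (Finset.univ.filter (fun j : Fin n => k' < j ∧ π j < π k')) := by
      intro j hj
      simp only [Finset.mem_filter, Finset.mem_univ, true_and] at hj ⊢
      have hj2 : π j < π k' := hj.2.trans hlt2
      have hjne : j ≠ k' := fun he => absurd (he ▸ hj2) (lt_irrefl _)
      refine ⟨?_, hj2⟩
      rw [Fin.lt_def] at hj ⊢
      have := Fin.val_ne_of_ne hjne
      simp only [hk'] at this ⊢
      omega
    have h3 := Finset.card_le_card hsub
    simp only [lehmer, Nat.cast_lt] at hlt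
    omega
  · intro hlt
    have hk'notmem : k' ∉ (Finset.univ.filter (fun j : Fin n => k' < j ∧ π j < π k')) := by
      simp
    have hsub : insert k' (Finset.univ.filter (fun j : Fin n => k' < j ∧ π j < π k')) ⊆
        (Finset.univ.filter (fun j : Fin n => k < j ∧ π j < π k)) := by
      intro j hj
      rcases Finset.mem_insert.mp hj with rfl | hj
      · simp only [Finset.mem_filter, Finset.mem_univ, true_and]
        exact ⟨hkk', hlt⟩
      · simp only [Finset.mem_filter, Finset.mem_univ, true_and] at hj ⊢
        exact ⟨hkk'.trans hj.1, hj.2.trans hlt⟩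
    have := Finset.card_le_card hsub
    rw [Finset.card_insert_of_notMem hk'notmem] at this
    unfold lehmer
    push_cast
    omega

lemma filter_lt_card_lt {n : ℕ} {S : Finset (Fin n)} {a b : Fin n} (ha : a ∈ S) (hab : a < b) :
    (S.filter (· < a)).card < (S.filter (· < b)).card := by
  apply Finset.card_lt_card
  constructor
  · intro v hv
    simp only [Finset.mem_filter] at hv ⊢
    exact ⟨hv.1, hv.2.trans hab⟩
  · intro hsub
    have h2 : a ∈ S.filter (· < a) := hsub (by simp only [Finset.mem_filter]; exact ⟨ha, hab⟩)
    rw [Finset.mem_filter] at h2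
    exact lt_irrefl a h2.2

lemma lehmer_eq_count {n : ℕ} (π : Equiv.Perm (Fin n)) (k : Fin n) :
    lehmer π k = (((Finset.univ.filter (fun j : Fin n => k ≤ j)).image π).filter (· < π k)).card := by
  rw [Finset.filter_image]
  rw [Finset.card_image_of_injective _ π.injective]
  unfold lehmer
  congr 2
  rw [Finset.filter_filter]
  apply Finset.filter_congr
  intro j _
  show _ ↔ _
  constructor
  · rintro ⟨h1, h2⟩; exact ⟨le_of_lt h1, h2⟩
  · rintro ⟨h1, h2⟩
    refine ⟨lt_of_le_of_ne h1 ?_, h2⟩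
    rintro rfl; exact absurd h2 (lt_irrefl _)

lemma lehmer_injective {n : ℕ} : Function.Injective (lehmer (n := n)) := by
  intro π σ hps
  have key : ∀ m : ℕ, ∀ k : Fin n, (k : ℕ) < m → π k = σ k := by
    intro m
    induction m with
    | zero => intro k hk; omega
    | succ m ih =>
      intro k hk
      rcases Nat.lt_or_ge (k : ℕ) m with hlt | hge
      · exact ih k hlt
      have hkm : (k : ℕ) = m := by omega
      -- prefix equality
      have hpre : ∀ j : Fin n, j < k → π j = σ j := by
        intro j hj
        exact ih j (by rw [← hkm]; exact hj)
      -- the remaining-value sets agree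
      have hS : (Finset.univ.filter (fun j : Fin n => k ≤ j)).image π =
          (Finset.univ.filter (fun j : Fin n => k ≤ j)).image σ := by
        ext v
        simp only [Finset.mem_image, Finset.mem_filter, Finset.mem_univ, true_and]
        constructor
        · rintro ⟨j, hj, rfl⟩
          by_contra hc
          push_neg at hc
          set j' := σ.symm (π j) with hjdef
          have hσj' : σ j' = π j := by simp [hjdef]
          rcases le_or_gt k j' with h1 | h1
          · exact hc j' h1 hσj'
          · have h2 : π j' = π j := by rw [hpre j' h1]; exact hσj'
            have h3 := π.injective h2
            rw [h3] at h1
            exact absurd hj (not_le.mpr h1)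
        · rintro ⟨j, hj, rfl⟩
          by_contra hc
          push_neg at hc
          set j' := π.symm (σ j) with hjdef
          have hπj' : π j' = σ j := by simp [hjdef]
          rcases le_or_gt k j' with h1 | h1
          · exact hc j' h1 hπj'
          · have h2 : σ j' = σ j := by rw [← hpre j' h1]; exact hπj'
            have h3 := σ.injective h2
            rw [h3] at h1
            exact absurd hj (not_le.mpr h1)
      have hc1 := lehmer_eq_count π k
      have hc2 := lehmer_eq_count σ k
      have heq : (((Finset.univ.filter (fun j : Fin n => k ≤ j)).image π).filter (· < π k)).card =
          (((Finset.univ.filter (fun j : Fin n => k ≤ j)).image π).filter (· < σ k)).card := by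
        have := congrFun hps k
        rw [hc1, hc2, ← hS] at this
        exact_mod_cast this
      have hπk : π k ∈ (Finset.univ.filter (fun j : Fin n => k ≤ j)).image π :=
        Finset.mem_image.mpr ⟨k, by simp, rfl⟩
      have hσk : σ k ∈ (Finset.univ.filter (fun j : Fin n => k ≤ j)).image π := by
        rw [hS]; exact Finset.mem_image.mpr ⟨k, by simp, rfl⟩
      rcases lt_trichotomy (π k) (σ k) with h | h | h
      · exact absurd heq (Nat.ne_of_lt (filter_lt_card_lt hπk h))
      · exact h
      · exact absurd heq.symm (Nat.ne_of_lt (filter_lt_card_lt hσk h))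
  exact Equiv.ext (fun k => key n k k.isLt)

def invSeqEquiv (n : ℕ) :
    {r : Fin n → ℤ // ∀ k : Fin n, 0 ≤ r k ∧ r k + ((k : ℕ) : ℤ) < (n : ℤ)} ≃
      (∀ k : Fin n, Fin (n - (k : ℕ))) where
  toFun r k := ⟨(r.1 k).toNat, by have := r.2 k; omega⟩
  invFun f := ⟨fun k => ((f k : ℕ) : ℤ), by
    intro k
    have h1 := (f k).isLt
    have h2 := k.isLt
    constructor
    · positivity
    · push_cast; omega⟩
  left_inv r := by
    ext k
    simp only
    exact Int.toNat_of_nonneg (r.2 k).1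
  right_inv f := by
    ext k
    simp

lemma ncard_invSeq (n : ℕ) :
    Set.ncard {r : Fin n → ℤ | ∀ k : Fin n, 0 ≤ r k ∧ r k + ((k : ℕ) : ℤ) < (n : ℤ)} =
      n.factorial := by
  rw [← Nat.card_coe_set_eq]
  rw [Nat.card_congr (show ↥{r : Fin n → ℤ | ∀ k : Fin n, 0 ≤ r k ∧ r k + ((k : ℕ) : ℤ) < (n : ℤ)} ≃
    (∀ k : Fin n, Fin (n - (k : ℕ))) from invSeqEquiv n)]
  rw [Nat.card_eq_fintype_card, Fintype.card_pi]
  simp only [Fintype.card_fin]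
  rw [Fin.prod_univ_eq_prod_range (fun k => n - k) n]
  have h := Finset.prod_range_reflect (fun i => i + 1) n
  calc ∏ j ∈ Finset.range n, (n - j) = ∏ j ∈ Finset.range n, (n - 1 - j + 1) := by
        apply Finset.prod_congr rfl
        intro j hj
        have := Finset.mem_range.mp hj
        omega
    _ = ∏ j ∈ Finset.range n, (j + 1) := h
    _ = n.factorial := by rw [Finset.prod_range_add_one_eq_factorial]

lemma invSeq_finite (n : ℕ) :
    {r : Fin n → ℤ | ∀ k : Fin n, 0 ≤ r k ∧ r k + ((k : ℕ) : ℤ) < (n : ℤ)}.Finite := by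
  rw [← Set.finite_coe_iff]
  exact Finite.of_equiv _ (invSeqEquiv n).symm

lemma lehmer_surj (n : ℕ) :
    lehmer '' (Set.univ : Set (Equiv.Perm (Fin n))) =
      {r : Fin n → ℤ | ∀ k : Fin n, 0 ≤ r k ∧ r k + ((k : ℕ) : ℤ) < (n : ℤ)} := by
  apply Set.eq_of_subset_of_ncard_le
  · rintro r ⟨π, -, rfl⟩
    exact fun k => lehmer_mem π k
  · rw [Set.ncard_image_of_injective _ lehmer_injective, Set.ncard_univ,
      Nat.card_eq_fintype_card, Fintype.card_perm, Fintype.card_fin, ncard_invSeq]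
  · exact invSeq_finite n

lemma rDes_lehmer {n : ℕ} (π : Equiv.Perm (Fin n)) :
    rDes (lehmer π) =
      Set.ncard {k : Fin n | ∃ h : (k : ℕ) + 1 < n, π ⟨(k : ℕ) + 1, h⟩ < π k} := by
  unfold rDes
  congr 1
  ext k
  exact exists_congr fun h => lehmer_lt_iff π k h

/-- The number of inversion sequences of length `n` with exactly `i`
descents equals the number of permutations of `{1,…,n}` with exactly `i` descents. -/
theorem stmt_0 (n : ℕ) (hn : 0 < n) (i : ℕ) :
    Set.ncard {r : Fin n → ℤ |
        (∀ k : Fin n, 0 ≤ r k ∧ r k + ((k : ℕ) : ℤ) < (n : ℤ)) ∧ rDes r = i} =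
    Set.ncard {π : Equiv.Perm (Fin n) |
        Set.ncard {k : Fin n | ∃ h : (k : ℕ) + 1 < n, π ⟨(k : ℕ) + 1, h⟩ < π k} = i} := by
  have himg : lehmer '' {π : Equiv.Perm (Fin n) |
      Set.ncard {k : Fin n | ∃ h : (k : ℕ) + 1 < n, π ⟨(k : ℕ) + 1, h⟩ < π k} = i} =
      {r : Fin n → ℤ |
        (∀ k : Fin n, 0 ≤ r k ∧ r k + ((k : ℕ) : ℤ) < (n : ℤ)) ∧ rDes r = i} := by
    ext r
    constructor
    · rintro ⟨π, hπ, rfl⟩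
      exact ⟨fun k => lehmer_mem π k, by rw [rDes_lehmer]; exact hπ⟩
    · rintro ⟨h1, h2⟩
      have hr : r ∈ lehmer '' (Set.univ : Set (Equiv.Perm (Fin n))) := by
        rw [lehmer_surj]; exact h1
      obtain ⟨π, -, rfl⟩ := hr
      exact ⟨π, by simp only [Set.mem_setOf_eq, ← rDes_lehmer π]; exact h2, rfl⟩
  rw [← himg, Set.ncard_image_of_injective _ lehmer_injective]
end

section
/- Let s = (s_1,…,s_n) be a sequence of positive integers and s* = (s_1,…,s_n,1). For every nonnegative integer t, the number of lattice points λ ∈ ℤ^n satisfying 0 ≤ λ_1/s_1 ≤ λ_2/s_2 ≤ ⋯ ≤ λ_n/s_n ≤ t equals Σ_{i=0}^{n} ℓ^i(Par_{s*}) · C(t+n−i, n), where C(·,·) is the binomial coefficient. (Equivalently, the δ-vector of the s-lecture hall polytope P_s satisfies δ_{P_s,i} = ℓ^i(Par_{s*}).) -/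
/-!
Put `σ = (s, 1)` and `w_j = lhVec σ j`. A lattice point `λ` lies in `t P_s` exactly when `(λ, t)`
lies in the cone spanned by the `w_j`, in which `x` has the coordinates
`c_j = x_j / σ_j - x_{j-1} / σ_{j-1} ≥ 0`. Splitting each `c_j` into `⌊c_j⌋ + fract c_j` writes
every lattice point of the cone uniquely as `p + ∑ k_j w_j` with `p` a lattice point of `Par_σ`
and `k ∈ ℕ^{n+1}`. Every `w_j` has last coordinate `σ_n = 1`, so the last coordinate of
`p + ∑ k_j w_j` is `p_n + ∑ k_j`; hence the points with last coordinate `t` and `p_n = i` number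
`ℓ^i(Par_σ)` times the `C(t - i + n, n)` ways of writing `t - i` as a sum of `n + 1` naturals.
-/

open Finset

theorem Fin.sum_Iic_zero {M : Type*} [AddCommMonoid M] {n : ℕ} (f : Fin (n + 1) → M) :
    ∑ j ∈ Iic 0, f j = f 0 := by
  rw [← bot_eq_zero, Iic_bot, sum_singleton]

theorem Fin.sum_Iic_succ {M : Type*} [AddCommMonoid M] {n : ℕ} (f : Fin (n + 1) → M)
    (i : Fin n) : ∑ j ∈ Iic i.succ, f j = ∑ j ∈ Iic i.castSucc, f j + f i.succ := by
  have : Iic i.succ = insert i.succ (Iic i.castSucc) := by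
    ext j
    simp only [mem_Iic, mem_insert, Fin.le_def, Fin.ext_iff, Fin.val_succ, Fin.val_castSucc]
    omega
  rw [this, sum_insert (by simp [Fin.le_def]), add_comm]

namespace LectureHall

variable {N n : ℕ}

def lhCone (σ : Fin N → ℕ) : Set (Fin N → ℝ) :=
  {x | ∃ c : Fin N → ℝ, (∀ j, 0 ≤ c j) ∧ x = ∑ j, c j • lhVec σ j}

theorem sum_smul_lhVec_apply (σ : Fin N → ℕ) (c : Fin N → ℝ) (i : Fin N) :
    (∑ j, c j • lhVec σ j) i = σ i * ∑ j ∈ Iic i, c j := by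
  simp only [Finset.sum_apply, Pi.smul_apply, lhVec, smul_eq_mul, mul_ite, mul_zero,
    ← Finset.sum_filter, Finset.mul_sum]
  exact Finset.sum_congr (by ext; simp) fun j _ => mul_comm _ _

theorem nonneg_and_lt_of_mem_lhPar {σ : Fin N → ℕ} (hσ : ∀ i, 0 < σ i) {x : Fin N → ℝ}
    (hx : x ∈ lhPar σ) (i : Fin N) : 0 ≤ x i ∧ x i < σ i * N := by
  obtain ⟨c, hc, rfl⟩ := hx
  rw [sum_smul_lhVec_apply]
  have hσi : (0 : ℝ) < σ i := Nat.cast_pos.2 (hσ i)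
  have hsum : ∑ j ∈ Iic i, c j < N :=
    calc ∑ j ∈ Iic i, c j < ∑ j ∈ Iic i, (1 : ℝ) :=
          sum_lt_sum_of_nonempty ⟨i, mem_Iic.2 le_rfl⟩ fun j _ => (hc j).2
      _ = #(Iic i) := by simp
      _ ≤ N := by exact_mod_cast (card_le_univ _).trans (Fintype.card_fin N).le
  exact ⟨mul_nonneg hσi.le (sum_nonneg fun j _ => (hc j).1), mul_lt_mul_of_pos_left hsum hσi⟩

theorem finite_lhPar_lattice {σ : Fin N → ℕ} (hσ : ∀ i, 0 < σ i) :
    {x : Fin N → ℤ | (fun i => (x i : ℝ)) ∈ lhPar σ}.Finite := by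
  refine (Set.Finite.pi (t := fun i => Set.Ico (0 : ℤ) (σ i * N))
    fun i => Set.finite_Ico _ _).subset fun x hx => ?_
  simp only [Set.mem_pi, Set.mem_univ, Set.mem_Ico, true_implies]
  intro i
  have := nonneg_and_lt_of_mem_lhPar hσ hx i
  exact ⟨by exact_mod_cast this.1, by exact_mod_cast this.2⟩

noncomputable def lhCoord (σ : Fin (n + 1) → ℕ) (x : Fin (n + 1) → ℝ) : Fin (n + 1) → ℝ :=
  Fin.cases (x 0 / σ 0) fun j => x j.succ / σ j.succ - x j.castSucc / σ j.castSucc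

variable {σ : Fin (n + 1) → ℕ}

@[simp] theorem lhCoord_zero (x : Fin (n + 1) → ℝ) : lhCoord σ x 0 = x 0 / σ 0 := rfl

@[simp] theorem lhCoord_succ (x : Fin (n + 1) → ℝ) (j : Fin n) :
    lhCoord σ x j.succ = x j.succ / σ j.succ - x j.castSucc / σ j.castSucc := rfl

theorem lhCoord_add (x y : Fin (n + 1) → ℝ) :
    lhCoord σ (x + y) = lhCoord σ x + lhCoord σ y := by
  ext j
  cases j using Fin.cases <;> simp [add_div]; ring

theorem lhCoord_sum_smul_lhVec (hσ : ∀ i, 0 < σ i) (c : Fin (n + 1) → ℝ) :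
    lhCoord σ (∑ j, c j • lhVec σ j) = c := by
  have hσ' : ∀ i, (σ i : ℝ) ≠ 0 := fun i => (Nat.cast_pos.2 (hσ i)).ne'
  ext j
  cases j using Fin.cases <;>
    simp only [lhCoord_zero, lhCoord_succ, sum_smul_lhVec_apply, mul_div_cancel_left₀ _ (hσ' _),
      Fin.sum_Iic_succ, Fin.sum_Iic_zero, add_sub_cancel_left]

theorem lhCoord_injective (hσ : ∀ i, 0 < σ i) : Function.Injective (lhCoord σ) := by
  intro x y h
  have hdiv : ∀ i, x i / σ i = y i / σ i := by
    intro i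
    induction i using Fin.induction with
    | zero => simpa using congrFun h 0
    | succ i ih =>
      have := congrFun h i.succ
      simp only [lhCoord_succ] at this
      linarith
  ext i
  exact (div_left_inj' (Nat.cast_pos.2 (hσ i)).ne').1 (hdiv i)

theorem sum_lhCoord_smul_lhVec (hσ : ∀ i, 0 < σ i) (x : Fin (n + 1) → ℝ) :
    ∑ j, lhCoord σ x j • lhVec σ j = x :=
  lhCoord_injective hσ (lhCoord_sum_smul_lhVec hσ _)

theorem mem_lhPar_iff (hσ : ∀ i, 0 < σ i) (x : Fin (n + 1) → ℝ) :
    x ∈ lhPar σ ↔ ∀ j, 0 ≤ lhCoord σ x j ∧ lhCoord σ x j < 1 := by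
  constructor
  · rintro ⟨c, hc, rfl⟩
    rwa [lhCoord_sum_smul_lhVec hσ]
  · exact fun h => ⟨lhCoord σ x, h, (sum_lhCoord_smul_lhVec hσ x).symm⟩

theorem mem_lhCone_iff (hσ : ∀ i, 0 < σ i) (x : Fin (n + 1) → ℝ) :
    x ∈ lhCone σ ↔ ∀ j, 0 ≤ lhCoord σ x j := by
  constructor
  · rintro ⟨c, hc, rfl⟩
    rwa [lhCoord_sum_smul_lhVec hσ]
  · exact fun h => ⟨lhCoord σ x, h, (sum_lhCoord_smul_lhVec hσ x).symm⟩

theorem forall_lhCoord_nonneg_iff (x : Fin (n + 1) → ℝ) :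
    (∀ j, 0 ≤ lhCoord σ x j) ↔ 0 ≤ x 0 / σ 0 ∧ Monotone fun i => x i / σ i := by
  simp [Fin.forall_fin_succ, Fin.monotone_iff_le_succ]

def lhComb (σ : Fin N → ℕ) (k : Fin N → ℕ) : Fin N → ℤ :=
  fun i => σ i * ∑ j ∈ Iic i, (k j : ℤ)

theorem cast_lhComb (σ : Fin N → ℕ) (k : Fin N → ℕ) :
    (fun i => (lhComb σ k i : ℝ)) = ∑ j, (k j : ℝ) • lhVec σ j := by
  ext i
  rw [sum_smul_lhVec_apply]
  simp [lhComb]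

theorem lhComb_last (hσ : σ (Fin.last n) = 1) (k : Fin (n + 1) → ℕ) :
    lhComb σ k (Fin.last n) = ∑ j, (k j : ℤ) := by
  simp only [lhComb, hσ, Nat.cast_one, one_mul]
  rw [← Fin.top_eq_last, Iic_top]

theorem last_nonneg_and_lt_of_mem_lhPar (hσ : ∀ i, 0 < σ i) (hlast : σ (Fin.last n) = 1)
    {p : Fin (n + 1) → ℤ} (hp : (fun i => (p i : ℝ)) ∈ lhPar σ) :
    0 ≤ p (Fin.last n) ∧ p (Fin.last n) < n + 1 := by
  have hb := nonneg_and_lt_of_mem_lhPar hσ hp (Fin.last n)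
  rw [hlast, Nat.cast_one, one_mul] at hb
  exact ⟨by exact_mod_cast hb.1, by exact_mod_cast hb.2⟩

theorem lhCoord_add_lhComb (hσ : ∀ i, 0 < σ i) (p : Fin (n + 1) → ℤ) (k : Fin (n + 1) → ℕ) :
    lhCoord σ (fun i => ((p + lhComb σ k) i : ℝ)) =
      lhCoord σ (fun i => (p i : ℝ)) + fun j => (k j : ℝ) := by
  rw [← lhCoord_sum_smul_lhVec hσ (fun j => (k j : ℝ)), ← cast_lhComb, ← lhCoord_add]
  congr 1
  ext i
  simp

theorem add_lhComb_mem_lhCone (hσ : ∀ i, 0 < σ i) {p : Fin (n + 1) → ℤ}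
    (hp : (fun i => (p i : ℝ)) ∈ lhPar σ) (k : Fin (n + 1) → ℕ) :
    (fun i => ((p + lhComb σ k) i : ℝ)) ∈ lhCone σ := by
  rw [mem_lhCone_iff hσ, lhCoord_add_lhComb hσ]
  exact fun j => add_nonneg ((mem_lhPar_iff hσ _).1 hp j).1 (Nat.cast_nonneg _)

theorem exists_mem_lhPar_add_lhComb_eq (hσ : ∀ i, 0 < σ i) {x : Fin (n + 1) → ℤ}
    (hx : (fun i => (x i : ℝ)) ∈ lhCone σ) :
    ∃ p k, (fun i => (p i : ℝ)) ∈ lhPar σ ∧ p + lhComb σ k = x := by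
  rw [mem_lhCone_iff hσ] at hx
  set c := lhCoord σ (fun i => (x i : ℝ))
  set k : Fin (n + 1) → ℕ := fun j => ⌊c j⌋₊
  refine ⟨x - lhComb σ k, k, (mem_lhPar_iff hσ _).2 fun j => ?_, sub_add_cancel _ _⟩
  have hc := congrFun (lhCoord_add_lhComb hσ (x - lhComb σ k) k) j
  rw [sub_add_cancel] at hc
  simp only [Pi.add_apply] at hc
  exact ⟨by linarith [Nat.floor_le (hx j)], by linarith [Nat.lt_floor_add_one (c j)]⟩

theorem eq_of_add_lhComb_eq (hσ : ∀ i, 0 < σ i) {p p' : Fin (n + 1) → ℤ}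
    {k k' : Fin (n + 1) → ℕ} (hp : (fun i => (p i : ℝ)) ∈ lhPar σ)
    (hp' : (fun i => (p' i : ℝ)) ∈ lhPar σ) (h : p + lhComb σ k = p' + lhComb σ k') :
    p = p' ∧ k = k' := by
  rw [mem_lhPar_iff hσ] at hp hp'
  have hc := congrArg (fun x => lhCoord σ (fun i => (x i : ℝ))) h
  simp only [lhCoord_add_lhComb hσ] at hc
  have hk : k = k' := by
    ext j
    have hj := congrArg Nat.floor (congrFun hc j)
    simp only [Pi.add_apply] at hj
    rwa [Nat.floor_add_natCast (hp j).1, Nat.floor_add_natCast (hp' j).1,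
      Nat.floor_eq_zero.2 (hp j).2, Nat.floor_eq_zero.2 (hp' j).2, zero_add, zero_add] at hj
  subst hk
  exact ⟨add_right_cancel h, rfl⟩

theorem ncard_sum_eq (n m : ℕ) :
    {k : Fin (n + 1) → ℕ | ∑ j, k j = m}.ncard = (m + n).choose n := by
  rw [← Nat.card_coe_set_eq, Set.coe_ofPred, ← Nat.card_congr (Sym.equivNatSumOfFintype _ _),
    Nat.card_eq_fintype_card, Sym.card_sym_eq_choose, Fintype.card_fin,
    show n + 1 + m - 1 = m + n by omega, Nat.choose_symm_add]

theorem finite_sum_eq (n m : ℕ) : {k : Fin (n + 1) → ℕ | ∑ j, k j = m}.Finite :=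
  Set.finite_coe_iff.1 (Finite.of_equiv _ (Sym.equivNatSumOfFintype _ _))

theorem ncard_add_sum_eq {n i : ℕ} (hi : i ≤ n) (t : ℕ) :
    {k : Fin (n + 1) → ℕ | i + ∑ j, k j = t}.ncard = (t + n - i).choose n := by
  rcases le_or_gt i t with hit | hti
  · have : {k : Fin (n + 1) → ℕ | i + ∑ j, k j = t} = {k | ∑ j, k j = t - i} := by
      ext
      simp only [Set.mem_ofPred_eq]
      omega
    rw [this, ncard_sum_eq, show t - i + n = t + n - i by omega]
  · have : {k : Fin (n + 1) → ℕ | i + ∑ j, k j = t} = ∅ :=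
      Set.eq_empty_of_forall_notMem fun k (hk : i + ∑ j, k j = t) => by omega
    rw [this, Set.ncard_empty, Nat.choose_eq_zero_of_lt (by omega)]

theorem finite_add_sum_eq (n i t : ℕ) : {k : Fin (n + 1) → ℕ | i + ∑ j, k j = t}.Finite :=
  (finite_sum_eq n (t - i)).subset fun k (hk : i + ∑ j, k j = t) =>
    show ∑ j, k j = t - i by omega

theorem lhEll_eq_ncard (S : Set (Fin (n + 1) → ℝ)) (i : ℕ) :
    lhEll S i = {x : Fin (n + 1) → ℤ | (fun k => (x k : ℝ)) ∈ S ∧ x (Fin.last n) = i}.ncard := by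
  unfold lhEll
  congr 1
  ext x
  refine and_congr_right fun _ => ⟨fun h => h _ (by simp), fun h j hj => ?_⟩
  obtain rfl : j = Fin.last n := Fin.ext (by simpa using hj)
  exact h

theorem ncard_lhCone_slice (hσ : ∀ i, 0 < σ i) (hlast : σ (Fin.last n) = 1) (t : ℕ) :
    {x : Fin (n + 1) → ℤ | (fun i => (x i : ℝ)) ∈ lhCone σ ∧ x (Fin.last n) = t}.ncard =
      ∑ i ∈ range (n + 1), lhEll (lhPar σ) i * (t + n - i).choose n := by
  set P : ℕ → Set (Fin (n + 1) → ℤ) :=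
    fun i => {x | (fun k => (x k : ℝ)) ∈ lhPar σ ∧ x (Fin.last n) = i}
  set K : ℕ → Set (Fin (n + 1) → ℕ) := fun i => {k | i + ∑ j, k j = t}
  have hslice : {x : Fin (n + 1) → ℤ | (fun i => (x i : ℝ)) ∈ lhCone σ ∧ x (Fin.last n) = t} =
      (fun pk => pk.1 + lhComb σ pk.2) '' ⋃ i ∈ (range (n + 1) : Set ℕ), P i ×ˢ K i := by
    ext x
    simp only [Set.mem_ofPred_eq, Set.mem_image, Set.mem_iUnion, Set.mem_prod, P, K,
      Finset.coe_range, Set.mem_Iio, Prod.exists, exists_prop]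
    constructor
    · rintro ⟨hx, hxt⟩
      obtain ⟨p, k, hp, rfl⟩ := exists_mem_lhPar_add_lhComb_eq hσ hx
      obtain ⟨h0, h1⟩ := last_nonneg_and_lt_of_mem_lhPar hσ hlast hp
      rw [Pi.add_apply, lhComb_last hlast] at hxt
      exact ⟨p, k, ⟨(p (Fin.last n)).toNat, by omega, ⟨hp, by omega⟩,
        Int.ofNat_inj.1 (by push_cast; omega)⟩, rfl⟩
    · rintro ⟨p, k, ⟨i, -, ⟨hp, hpi⟩, hk⟩, rfl⟩
      refine ⟨add_lhComb_mem_lhCone hσ hp k, ?_⟩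
      rw [Pi.add_apply, lhComb_last hlast, hpi, ← hk]
      push_cast
      rfl
  have hinj : Set.InjOn (fun pk => pk.1 + lhComb σ pk.2)
      (⋃ i ∈ (range (n + 1) : Set ℕ), P i ×ˢ K i) := by
    rintro ⟨p, k⟩ hpk ⟨p', k'⟩ hpk' h
    simp only [Set.mem_iUnion, Set.mem_prod] at hpk hpk'
    obtain ⟨-, -, ⟨hp, -⟩, -⟩ := hpk
    obtain ⟨-, -, ⟨hp', -⟩, -⟩ := hpk'
    obtain ⟨rfl, rfl⟩ := eq_of_add_lhComb_eq hσ hp hp' h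
    rfl
  have hdisj : (range (n + 1) : Set ℕ).PairwiseDisjoint fun i => P i ×ˢ K i :=
    fun i _ i' _ hii' => Set.disjoint_prod.2 <| Or.inl <| Set.disjoint_left.2
      fun x hx hx' => hii' (by exact_mod_cast hx.2.symm.trans hx'.2)
  have hfin : ∀ i ∈ (range (n + 1) : Set ℕ), (P i ×ˢ K i).Finite := fun i _ =>
    ((finite_lhPar_lattice hσ).subset fun x hx => hx.1).prod (finite_add_sum_eq n i t)
  rw [hslice, hinj.ncard_image, Set.Finite.ncard_biUnion (finite_toSet _) hfin hdisj,
    finsum_mem_coe_finset]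
  refine sum_congr rfl fun i hi => ?_
  rw [Set.ncard_prod, ncard_add_sum_eq (Nat.lt_succ_iff.1 (mem_range.1 hi)), lhEll_eq_ncard]

theorem chain_iff_monotone_snoc {α : Type*} [Preorder α] [Zero α] (r : Fin n → α) {a : α}
    (ha : 0 ≤ a) :
    ((∀ i : Fin n, (i : ℕ) = 0 → 0 ≤ r i) ∧
      (∀ i : Fin n, ∀ h : (i : ℕ) + 1 < n, r i ≤ r ⟨(i : ℕ) + 1, h⟩) ∧
      (∀ i : Fin n, (i : ℕ) = n - 1 → r i ≤ a)) ↔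
      0 ≤ (Fin.snoc r a : Fin (n + 1) → α) 0 ∧ Monotone (Fin.snoc r a : Fin (n + 1) → α) := by
  cases n with
  | zero => simpa [Subsingleton.monotone, Fin.snoc] using ha
  | succ m =>
    have hsucc (i : Fin m) : (⟨(i : ℕ) + 1, by omega⟩ : Fin (m + 1)) = i.succ := rfl
    have hne (i : Fin m) : (i : ℕ) ≠ m := i.is_lt.ne
    simp [Fin.forall_fin_succ', Fin.monotone_iff_le_succ, hsucc, hne, Fin.succ_castSucc,
      -Fin.castSucc_succ]

theorem snoc_one_pos {s : Fin n → ℕ} (hs : ∀ i, 0 < s i) (i : Fin (n + 1)) :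
    0 < (Fin.snoc s 1 : Fin (n + 1) → ℕ) i := by
  cases i using Fin.lastCases <;> simp [hs]

theorem inDilate_iff_snoc_mem_lhCone {s : Fin n → ℕ} (hs : ∀ i, 0 < s i) (t : ℕ)
    (lam : Fin n → ℤ) :
    inDilate s t lam ↔
      (fun i => ((Fin.snoc lam (t : ℤ) : Fin (n + 1) → ℤ) i : ℝ)) ∈ lhCone (Fin.snoc s 1) := by
  set q : Fin (n + 1) → ℚ := Fin.snoc (fun i => (lam i : ℚ) / s i) (t : ℚ)
  have hq (i : Fin (n + 1)) : ((Fin.snoc lam (t : ℤ) : Fin (n + 1) → ℤ) i : ℝ) /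
      ((Fin.snoc s 1 : Fin (n + 1) → ℕ) i : ℝ) = (q i : ℝ) := by
    cases i using Fin.lastCases <;> simp [q]
  simp only [mem_lhCone_iff (snoc_one_pos hs), forall_lhCoord_nonneg_iff, hq, inDilate,
    chain_iff_monotone_snoc _ (Nat.cast_nonneg (α := ℚ) t), Rat.cast_nonneg]
  simp [Monotone, Rat.cast_le, q]

theorem image_snoc_setOf_inDilate {s : Fin n → ℕ} (hs : ∀ i, 0 < s i) (t : ℕ) :
    (fun lam => (Fin.snoc lam (t : ℤ) : Fin (n + 1) → ℤ)) '' {lam | inDilate s t lam} =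
      {x : Fin (n + 1) → ℤ | (fun i => (x i : ℝ)) ∈ lhCone (Fin.snoc s 1) ∧
        x (Fin.last n) = t} := by
  ext x
  simp only [Set.mem_image, Set.mem_ofPred_eq, inDilate_iff_snoc_mem_lhCone hs]
  constructor
  · rintro ⟨lam, hlam, rfl⟩
    exact ⟨hlam, Fin.snoc_last _ _⟩
  · rintro ⟨hx, hxt⟩
    refine ⟨Fin.init x, ?_, ?_⟩ <;> rw [← hxt, Fin.snoc_init_self]
    exact hx

end LectureHall

open LectureHall

/-- Ehrhart: the number of lattice points in the `t`-th dilate of `P_s`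
equals `∑_{i=0}^n ℓ^i(Par_{s*}) · C(t+n-i, n)`. -/
theorem stmt_1 (n : ℕ) (s : Fin n → ℕ) (hs : ∀ i, 0 < s i) (t : ℕ) :
    Set.ncard {lam : Fin n → ℤ | inDilate s t lam} =
      ∑ i ∈ Finset.range (n + 1),
        lhEll (lhPar (Fin.snoc s 1)) i * Nat.choose (t + n - i) n := by
  rw [← ncard_lhCone_slice (snoc_one_pos hs) (Fin.snoc_last _ _) t, ← image_snoc_setOf_inDilate hs,
    Set.ncard_image_of_injective _ (Fin.snoc_left_injective (α := fun _ => ℤ) _)]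
end

section
/- Let s = (s_1,…,s_n) be a sequence of positive integers with s_n = 1, and let s* = (s_1,…,s_n,1). Then for every i with 0 ≤ i ≤ n, ℓ^i(Par_s) = ℓ^i(Par_{s*}); that is, the parallelepipeds Par_s ⊂ ℝ^n and Par_{s*} ⊂ ℝ^{n+1} have the same number of lattice points with last coordinate i. -/
lemma lh_sum_coord {N : ℕ} (s : Fin N → ℕ) (c : Fin N → ℝ) (k : Fin N) :
    (∑ j, c j • lhVec s j) k = ∑ j, c j * (if j ≤ k then (s k : ℝ) else 0) := by
  simp [lhVec, Finset.sum_apply]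


/-- if `s_n = 1` then `ℓ^i(Par_s) = ℓ^i(Par_{s*})` for `0 ≤ i ≤ n`. -/
theorem stmt_2 (n : ℕ) (hn : 0 < n) (s : Fin n → ℕ) (hs : ∀ i, 0 < s i)
    (hlast : s ⟨n - 1, by omega⟩ = 1) (i : ℕ) (hi : i ≤ n) :
    lhEll (lhPar s) i = lhEll (lhPar (Fin.snoc s 1)) i := by
  classical
  have hinj : Function.Injective (fun x : Fin n → ℤ => (Fin.snoc x (i : ℤ) : Fin (n+1) → ℤ)) := by
    intro a b hab
    funext k
    have := congrFun hab (Fin.castSucc k)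
    simpa using this
  set k0 : Fin n := ⟨n - 1, by omega⟩ with hk0
  have key : {x : Fin (n+1) → ℤ | (fun k => (x k : ℝ)) ∈ lhPar (Fin.snoc s 1) ∧
        ∀ j : Fin (n+1), (j : ℕ) = (n+1) - 1 → x j = (i : ℤ)}
      = (fun x : Fin n → ℤ => (Fin.snoc x (i : ℤ) : Fin (n+1) → ℤ)) ''
        {x : Fin n → ℤ | (fun k => (x k : ℝ)) ∈ lhPar s ∧
        ∀ j : Fin n, (j : ℕ) = n - 1 → x j = (i : ℤ)} := by
    ext y
    constructor
    · rintro ⟨⟨c', hc', hy⟩, hyi⟩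
      have hylast : y (Fin.last n) = (i : ℤ) := hyi _ (by simp)
      -- coordinate formulas
      have hyc : ∀ k : Fin (n+1), (y k : ℝ) =
          ∑ j, c' j * (if j ≤ k then ((Fin.snoc s 1 : Fin (n+1) → ℕ) k : ℝ) else 0) := by
        intro k
        have := congrFun hy k
        rw [lh_sum_coord] at this
        exact this
      -- last coordinate
      have h1 : (y (Fin.last n) : ℝ) = (∑ j : Fin n, c' (Fin.castSucc j)) + c' (Fin.last n) := by
        rw [hyc (Fin.last n)]
        rw [Fin.sum_univ_castSucc]
        simp [Fin.le_last]
      -- coordinate n-1, i.e. castSucc k0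
      have hsk0 : (Fin.snoc s 1 : Fin (n+1) → ℕ) (Fin.castSucc k0) = 1 := by
        rw [Fin.snoc_castSucc]; exact hlast
      have h2 : (y (Fin.castSucc k0) : ℝ) = ∑ j : Fin n, c' (Fin.castSucc j) := by
        rw [hyc (Fin.castSucc k0), Fin.sum_univ_castSucc, hsk0]
        have hnle : ¬ (Fin.last n ≤ Fin.castSucc k0) := by
          simp [Fin.le_def, hk0]; omega
        rw [if_neg hnle]
        simp only [mul_zero, add_zero, Nat.cast_one, mul_one]
        congr 1
        funext j
        have : Fin.castSucc j ≤ Fin.castSucc k0 := by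
          simp [Fin.le_def, hk0]; omega
        rw [if_pos this, mul_one]
      -- c' last is an integer in [0,1), hence 0
      have hcl : c' (Fin.last n) = ((i : ℤ) - y (Fin.castSucc k0) : ℤ) := by
        have := h1
        rw [hylast] at this
        push_cast at this ⊢
        linarith [h2]
      have hz : ((i : ℤ) - y (Fin.castSucc k0)) = 0 := by
        have h0 := (hc' (Fin.last n)).1
        have h1' := (hc' (Fin.last n)).2
        rw [hcl] at h0 h1'
        have hz0 : (0:ℤ) ≤ (i : ℤ) - y (Fin.castSucc k0) := by exact_mod_cast h0
        have hz1 : ((i : ℤ) - y (Fin.castSucc k0)) < 1 := by exact_mod_cast h1'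
        omega
      have hyk0 : y (Fin.castSucc k0) = (i : ℤ) := by omega
      have hcl0 : c' (Fin.last n) = 0 := by rw [hcl, hz]; simp
      -- the preimage x
      refine ⟨fun k => y (Fin.castSucc k), ⟨⟨fun j => c' (Fin.castSucc j),
        fun j => hc' _, ?_⟩, ?_⟩, ?_⟩
      · funext k
        rw [lh_sum_coord]
        have := hyc (Fin.castSucc k)
        rw [Fin.sum_univ_castSucc] at this
        have hnle : ¬ (Fin.last n ≤ Fin.castSucc k) :=
          Fin.not_le.mpr (Fin.castSucc_lt_last k)
        rw [if_neg hnle, mul_zero, add_zero] at this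
        simp only at this ⊢
        rw [this]
        congr 1
        funext j
        simp [Fin.castSucc_le_castSucc_iff]
      · intro j hj
        have : j = k0 := by
          apply Fin.ext; rw [hj, hk0]
        rw [this]
        exact hyk0
      · funext k
        refine Fin.lastCases ?_ ?_ k
        · simp [hylast]
        · intro j; simp
    · rintro ⟨x, ⟨⟨c, hc, hx⟩, hxi⟩, rfl⟩
      have hxc : ∀ k : Fin n, (x k : ℝ) =
          ∑ j, c j * (if j ≤ k then (s k : ℝ) else 0) := by
        intro k
        have := congrFun hx k
        rw [lh_sum_coord] at this
        exact this
      have hxk0 : x k0 = (i : ℤ) := hxi k0 rfl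
      have hsum : ∑ j : Fin n, c j = (i : ℝ) := by
        have := hxc k0
        rw [hxk0] at this
        have heq : ∀ j : Fin n, c j * (if j ≤ k0 then (s k0 : ℝ) else 0) = c j := by
          intro j
          have hle : j ≤ k0 := by
            simp [Fin.le_def, hk0]; omega
          rw [if_pos hle, hlast]; simp
        rw [Finset.sum_congr rfl (fun j _ => heq j)] at this
        push_cast at this
        linarith
      refine ⟨⟨Fin.snoc c 0, ?_, ?_⟩, ?_⟩
      · intro j
        refine Fin.lastCases ?_ ?_ j
        · simp
        · intro j'; rw [Fin.snoc_castSucc]; exact hc j'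
      · funext k
        rw [lh_sum_coord, Fin.sum_univ_castSucc]
        simp only [Fin.snoc_last, Fin.snoc_castSucc, zero_mul, add_zero]
        refine Fin.lastCases ?_ ?_ k
        · simp only [Fin.snoc_last, Fin.le_last, if_true, Nat.cast_one, mul_one]
          rw [hsum]
          norm_num
        · intro k'
          simp only [Fin.snoc_castSucc, Fin.castSucc_le_castSucc_iff]
          exact hxc k'
      · intro j hj
        have : j = Fin.last n := by apply Fin.ext; simpa using hj
        rw [this]; simp
  unfold lhEll
  rw [key, Set.ncard_image_of_injective _ hinj]
end

section
/- Let s = (s_1,…,s_n) be a sequence of positive integers. The map REM_s, which sends a lattice point x = (x_1,…,x_n) ∈ Par_s ∩ ℤ^n to the vector of remainders (x_1 mod s_1, …, x_n mod s_n), is a bijection from Par_s ∩ ℤ^n onto Ψ_n = {0,…,s_1−1} × ⋯ × {0,…,s_n−1}. -/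
private lemma ceil_bounds (a m : ℤ) (hm : 0 < m) :
    a ≤ (-((-a) / m)) * m ∧ (-((-a) / m)) * m < a + m := by
  have key : (-((-a) / m)) * m = a + (-a) % m := by
    linear_combination - Int.mul_ediv_add_emod (-a) m
  have h1 : 0 ≤ (-a) % m := Int.emod_nonneg _ (ne_of_gt hm)
  have h2 : (-a) % m < m := Int.emod_lt_of_pos _ hm
  constructor <;> linarith

private lemma lhVec_coord {n : ℕ} (s : Fin n → ℕ) (c : Fin n → ℝ) (i : Fin n) :
    (∑ j, c j • lhVec s j) i
      = (∑ j : Fin n, if (j : ℕ) ≤ (i : ℕ) then c j else 0) * (s i : ℝ) := by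
  simp only [Finset.sum_apply, Pi.smul_apply, lhVec, smul_eq_mul, Finset.sum_mul]
  refine Finset.sum_congr rfl fun j _ => ?_
  by_cases h : j ≤ i
  · rw [if_pos h, if_pos (Fin.le_def.mp h)]
  · rw [if_neg h, if_neg (fun hh => h (Fin.le_def.mpr hh)), mul_zero, zero_mul]

private lemma sum_base {n : ℕ} (c : Fin n → ℝ) (hn : 0 < n) :
    (∑ j : Fin n, if (j : ℕ) ≤ 0 then c j else 0) = c ⟨0, hn⟩ := by
  have h : ∀ j : Fin n, ((j : ℕ) ≤ 0) = (j = ⟨0, hn⟩) := fun j => by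
    simp [Fin.ext_iff, Nat.le_zero]
  simp only [h, Finset.sum_ite_eq', Finset.mem_univ, if_pos]

private lemma sum_step {n : ℕ} (c : Fin n → ℝ) (m : ℕ) (h : m + 1 < n) :
    (∑ j : Fin n, if (j : ℕ) ≤ m + 1 then c j else 0)
      = (∑ j : Fin n, if (j : ℕ) ≤ m then c j else 0) + c ⟨m + 1, h⟩ := by
  have hc : c ⟨m + 1, h⟩ = ∑ j : Fin n, if j = ⟨m + 1, h⟩ then c j else 0 := by
    simp [Finset.sum_ite_eq']
  rw [hc, ← Finset.sum_add_distrib]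
  refine Finset.sum_congr rfl fun j _ => ?_
  by_cases h1 : (j : ℕ) ≤ m
  · rw [if_pos (by omega), if_pos h1, if_neg (by simp [Fin.ext_iff]; omega), add_zero]
  · by_cases h2 : (j : ℕ) = m + 1
    · rw [if_pos (by omega), if_neg h1, if_pos (by simp [Fin.ext_iff, h2]), zero_add]
    · rw [if_neg (by omega), if_neg h1, if_neg (by simp [Fin.ext_iff]; omega), add_zero]

private def lhP {n : ℕ} (s : Fin n → ℕ) (x : Fin n → ℤ) : Prop :=
  (∀ i : Fin n, (i : ℕ) = 0 → 0 ≤ x i ∧ x i < (s i : ℤ)) ∧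
  (∀ i : Fin n, ∀ h : (i : ℕ) + 1 < n,
    x i * (s ⟨(i : ℕ) + 1, h⟩ : ℤ) ≤ x ⟨(i : ℕ) + 1, h⟩ * (s i : ℤ) ∧
    x ⟨(i : ℕ) + 1, h⟩ * (s i : ℤ)
      < x i * (s ⟨(i : ℕ) + 1, h⟩ : ℤ) + (s i : ℤ) * (s ⟨(i : ℕ) + 1, h⟩ : ℤ))

private lemma mem_lhPar_iff {n : ℕ} (s : Fin n → ℕ) (hs : ∀ i, 0 < s i) (x : Fin n → ℤ) :
    (fun k => (x k : ℝ)) ∈ lhPar s ↔ lhP s x := by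
  constructor
  · rintro ⟨c, hc, hx⟩
    have hco : ∀ i : Fin n,
        (x i : ℝ) = (∑ j : Fin n, if (j : ℕ) ≤ (i : ℕ) then c j else 0) * (s i : ℝ) := by
      intro i
      have := congrFun hx i
      rwa [lhVec_coord] at this
    constructor
    · intro i h0
      have hn : 0 < n := i.pos
      have hi : i = ⟨0, hn⟩ := Fin.ext h0
      have h1 : (x i : ℝ) = c i * (s i : ℝ) := by
        rw [hco i, h0, sum_base c hn, ← hi]
      have hsp : (0 : ℝ) < (s i : ℝ) := by exact_mod_cast hs i
      obtain ⟨hc0, hc1⟩ := hc i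
      constructor
      · exact_mod_cast (by rw [h1]; positivity : (0 : ℝ) ≤ (x i : ℝ))
      · exact_mod_cast (by rw [h1]; nlinarith : (x i : ℝ) < (s i : ℝ))
    · intro i h
      set i' : Fin n := ⟨(i : ℕ) + 1, h⟩ with hi'
      have h1 : (x i : ℝ) = (∑ j : Fin n, if (j : ℕ) ≤ (i : ℕ) then c j else 0) * (s i : ℝ) :=
        hco i
      have h2 : (x i' : ℝ)
          = ((∑ j : Fin n, if (j : ℕ) ≤ (i : ℕ) then c j else 0) + c i') * (s i' : ℝ) := by
        rw [hco i', ← sum_step c (i : ℕ) h]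
      have hsp : (0 : ℝ) < (s i : ℝ) := by exact_mod_cast hs i
      have hsp' : (0 : ℝ) < (s i' : ℝ) := by exact_mod_cast hs i'
      obtain ⟨hc0, hc1⟩ := hc i'
      have key1 : (x i : ℝ) * (s i' : ℝ) ≤ (x i' : ℝ) * (s i : ℝ) := by
        rw [h1, h2]
        nlinarith [mul_nonneg hc0 (mul_nonneg hsp'.le hsp.le)]
      have key2 : (x i' : ℝ) * (s i : ℝ) < (x i : ℝ) * (s i' : ℝ) + (s i : ℝ) * (s i' : ℝ) := by
        rw [h1, h2]
        nlinarith [mul_lt_mul_of_pos_right hc1 (mul_pos hsp hsp')]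
      exact ⟨by exact_mod_cast key1, by exact_mod_cast key2⟩
  · rintro ⟨hP1, hP2⟩
    set T : ℕ → ℝ := fun m => if h : m < n then (x ⟨m, h⟩ : ℝ) / (s ⟨m, h⟩ : ℝ) else 0 with hT
    set c : Fin n → ℝ := fun j =>
      if (j : ℕ) = 0 then T 0 else T (j : ℕ) - T ((j : ℕ) - 1) with hcdef
    refine ⟨c, ?_, ?_⟩
    · intro j
      by_cases h0 : (j : ℕ) = 0
      · have hn : 0 < n := j.pos
        have hj : j = ⟨0, hn⟩ := Fin.ext h0
        have hT0 : T 0 = (x j : ℝ) / (s j : ℝ) := by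
          have e : T 0 = (x ⟨0, hn⟩ : ℝ) / (s ⟨0, hn⟩ : ℝ) := dif_pos hn
          rw [e, ← hj]
        have hcj : c j = (x j : ℝ) / (s j : ℝ) := by
          simp only [hcdef]
          rw [if_pos h0, hT0]
        obtain ⟨ha, hb⟩ := hP1 j h0
        have hsp : (0 : ℝ) < (s j : ℝ) := by exact_mod_cast hs j
        have ha' : (0 : ℝ) ≤ (x j : ℝ) := by exact_mod_cast ha
        have hb' : (x j : ℝ) < (s j : ℝ) := by exact_mod_cast hb
        rw [hcj]
        exact ⟨div_nonneg ha' hsp.le, (div_lt_one hsp).mpr hb'⟩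
      · obtain ⟨m, hm⟩ : ∃ m, (j : ℕ) = m + 1 := ⟨(j : ℕ) - 1, by omega⟩
        have hmn : m < n := by have := j.2; omega
        have hm1n : m + 1 < n := by have := j.2; omega
        have hj : j = ⟨m + 1, hm1n⟩ := Fin.ext hm
        have e1 : T (m + 1) = (x j : ℝ) / (s j : ℝ) := by
          have e : T (m + 1) = (x ⟨m + 1, hm1n⟩ : ℝ) / (s ⟨m + 1, hm1n⟩ : ℝ) := dif_pos hm1n
          rw [e, ← hj]
        have e2 : T m = (x ⟨m, hmn⟩ : ℝ) / (s ⟨m, hmn⟩ : ℝ) := dif_pos hmn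
        have hcj : c j = (x j : ℝ) / (s j : ℝ) - (x ⟨m, hmn⟩ : ℝ) / (s ⟨m, hmn⟩ : ℝ) := by
          simp only [hcdef]
          rw [if_neg (by omega), hm, Nat.add_sub_cancel, e1, e2]
        obtain ⟨ha, hb⟩ := hP2 ⟨m, hmn⟩ (show m + 1 < n from hm1n)
        have ha' : x ⟨m, hmn⟩ * (s j : ℤ) ≤ x j * (s ⟨m, hmn⟩ : ℤ) := by rw [hj]; exact ha
        have hb' : x j * (s ⟨m, hmn⟩ : ℤ)
            < x ⟨m, hmn⟩ * (s j : ℤ) + (s ⟨m, hmn⟩ : ℤ) * (s j : ℤ) := by rw [hj]; exact hb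
        have hsj : (0 : ℝ) < (s j : ℝ) := by exact_mod_cast hs j
        have hsp : (0 : ℝ) < (s ⟨m, hmn⟩ : ℝ) := by exact_mod_cast hs _
        constructor
        · rw [hcj, sub_nonneg, div_le_div_iff₀ hsp hsj]
          exact_mod_cast ha'
        · rw [hcj, div_sub_div _ _ hsj.ne' hsp.ne', div_lt_one (by positivity)]
          have := (by exact_mod_cast hb' :
            (x j : ℝ) * (s ⟨m, hmn⟩ : ℝ)
              < (x ⟨m, hmn⟩ : ℝ) * (s j : ℝ) + (s ⟨m, hmn⟩ : ℝ) * (s j : ℝ))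
          linarith
    · funext i
      have htel : ∀ m, ∀ hm : m < n,
          (∑ j : Fin n, if (j : ℕ) ≤ m then c j else 0) = T m := by
        intro m
        induction m with
        | zero =>
          intro hm
          rw [sum_base c hm]
          show (if ((⟨0, hm⟩ : Fin n) : ℕ) = 0 then T 0 else _) = T 0
          rw [if_pos rfl]
        | succ m ih =>
          intro hm
          rw [sum_step c m hm, ih (by omega)]
          have hcs : c ⟨m + 1, hm⟩ = T (m + 1) - T m := by
            show (if ((⟨m + 1, hm⟩ : Fin n) : ℕ) = 0 then T 0
              else T ((⟨m + 1, hm⟩ : Fin n) : ℕ) - T (((⟨m + 1, hm⟩ : Fin n) : ℕ) - 1))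
              = T (m + 1) - T m
            rw [if_neg (by simp), Fin.val_mk, Nat.add_sub_cancel]
          rw [hcs]; ring
      show (x i : ℝ) = _
      rw [lhVec_coord, htel (i : ℕ) i.2]
      have hTi : T (i : ℕ) = (x i : ℝ) / (s i : ℝ) := by
        have e : T (i : ℕ) = (x ⟨(i : ℕ), i.2⟩ : ℝ) / (s ⟨(i : ℕ), i.2⟩ : ℝ) := dif_pos i.2
        rw [e, Fin.eta]
      rw [hTi, div_mul_cancel₀]
      exact_mod_cast (hs i).ne'

private def lhG (S R : ℕ → ℤ) : ℕ → ℤ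
  | 0 => R 0
  | (i + 1) => R (i + 1) + S (i + 1) *
      (-((-(lhG S R i * S (i + 1) - R (i + 1) * S i)) / (S i * S (i + 1))))

private lemma lhG_chain (S R : ℕ → ℤ) (hS : ∀ i, 0 < S i) (i : ℕ) :
    lhG S R i * S (i + 1) ≤ lhG S R (i + 1) * S i ∧
    lhG S R (i + 1) * S i < lhG S R i * S (i + 1) + S i * S (i + 1) := by
  set a : ℤ := lhG S R i * S (i + 1) - R (i + 1) * S i with ha
  set m : ℤ := S i * S (i + 1) with hm
  have hmp : 0 < m := mul_pos (hS i) (hS (i + 1))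
  obtain ⟨hb1, hb2⟩ := ceil_bounds a m hmp
  have heq : lhG S R (i + 1) * S i = R (i + 1) * S i + (-((-a) / m)) * m := by
    show (R (i + 1) + S (i + 1) * (-((-a) / m))) * S i = _
    ring
  constructor <;> [linarith [heq, hb1]; linarith [heq, hb2]]

private lemma lhG_mod (S R : ℕ → ℤ) (hR : ∀ i, 0 ≤ R i ∧ R i < S i) (i : ℕ) :
    lhG S R i % S i = R i := by
  cases i with
  | zero => exact Int.emod_eq_of_lt (hR 0).1 (hR 0).2
  | succ i =>
    show (R (i + 1) + S (i + 1) * _) % S (i + 1) = R (i + 1)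
    rw [Int.add_mul_emod_self_left]
    exact Int.emod_eq_of_lt (hR (i + 1)).1 (hR (i + 1)).2

private lemma lhG_nonneg (S R : ℕ → ℤ) (hS : ∀ i, 0 < S i) (hR : ∀ i, 0 ≤ R i ∧ R i < S i)
    (i : ℕ) : 0 ≤ lhG S R i := by
  induction i with
  | zero => exact (hR 0).1
  | succ i ih =>
    have h1 := (lhG_chain S R hS i).1
    by_contra hneg
    push_neg at hneg
    nlinarith [hS i, hS (i + 1), mul_nonneg ih (hS (i + 1)).le]

/-- the remainder map `REM_s` is a bijection from `Par_s ∩ ℤ^n` onto `Ψ_n`. -/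
theorem stmt_3 (n : ℕ) (s : Fin n → ℕ) (hs : ∀ i, 0 < s i) :
    Set.BijOn (fun (x : Fin n → ℤ) (i : Fin n) => x i % (s i : ℤ))
      {x : Fin n → ℤ | (fun k => (x k : ℝ)) ∈ lhPar s}
      (lhPsi s) := by
  have hsZ : ∀ i : Fin n, (0 : ℤ) < (s i : ℤ) := fun i => by exact_mod_cast hs i
  refine ⟨?_, ?_, ?_⟩
  · -- MapsTo
    intro x _ i
    exact ⟨Int.emod_nonneg _ (hsZ i).ne', Int.emod_lt_of_pos _ (hsZ i)⟩
  · -- InjOn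
    intro x hx y hy hxy
    rw [Set.mem_setOf_eq, mem_lhPar_iff s hs] at hx hy
    obtain ⟨hx1, hx2⟩ := hx
    obtain ⟨hy1, hy2⟩ := hy
    have key : ∀ m, ∀ hm : m < n, x ⟨m, hm⟩ = y ⟨m, hm⟩ := by
      intro m
      induction m with
      | zero =>
        intro hm
        obtain ⟨ha, hb⟩ := hx1 ⟨0, hm⟩ rfl
        obtain ⟨hc, hd⟩ := hy1 ⟨0, hm⟩ rfl
        have := congrFun hxy ⟨0, hm⟩
        simp only at this
        rwa [Int.emod_eq_of_lt ha hb, Int.emod_eq_of_lt hc hd] at this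
      | succ m ih =>
        intro hm
        have hmn : m < n := by omega
        have hIH := ih hmn
        obtain ⟨ha, hb⟩ := hx2 ⟨m, hmn⟩ (show m + 1 < n from hm)
        obtain ⟨hc, hd⟩ := hy2 ⟨m, hmn⟩ (show m + 1 < n from hm)
        have hmod := congrFun hxy ⟨m + 1, hm⟩
        simp only at hmod
        have hdvd : (s ⟨m + 1, hm⟩ : ℤ) ∣ (x ⟨m + 1, hm⟩ - y ⟨m + 1, hm⟩) := by
          apply Int.dvd_of_emod_eq_zero
          rw [Int.sub_emod, hmod, sub_self, Int.zero_emod]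
        obtain ⟨k, hk⟩ := hdvd
        have hsm := hsZ ⟨m, hmn⟩
        have hsm1 := hsZ ⟨m + 1, hm⟩
        have hlt1 : (x ⟨m + 1, hm⟩ - y ⟨m + 1, hm⟩) * (s ⟨m, hmn⟩ : ℤ)
            < (s ⟨m + 1, hm⟩ : ℤ) * (s ⟨m, hmn⟩ : ℤ) := by
          rw [sub_mul]
          rw [hIH] at hb
          linarith
        have hlt2 : -((s ⟨m + 1, hm⟩ : ℤ) * (s ⟨m, hmn⟩ : ℤ))
            < (x ⟨m + 1, hm⟩ - y ⟨m + 1, hm⟩) * (s ⟨m, hmn⟩ : ℤ) := by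
          rw [sub_mul]
          rw [hIH] at ha
          linarith
        have h1 : x ⟨m + 1, hm⟩ - y ⟨m + 1, hm⟩ < (s ⟨m + 1, hm⟩ : ℤ) :=
          lt_of_mul_lt_mul_right hlt1 hsm.le
        have h2 : -(s ⟨m + 1, hm⟩ : ℤ) < x ⟨m + 1, hm⟩ - y ⟨m + 1, hm⟩ := by
          by_contra hcon
          push_neg at hcon
          nlinarith
        have hk0 : k = 0 := by
          rcases lt_trichotomy k 0 with h | h | h
          · nlinarith
          · exact h
          · nlinarith
        have : x ⟨m + 1, hm⟩ - y ⟨m + 1, hm⟩ = 0 := by rw [hk, hk0, mul_zero]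
        linarith
    funext i
    have := key (i : ℕ) i.2
    rwa [Fin.eta] at this
  · -- SurjOn
    intro r hr
    have hrm : ∀ i : Fin n, 0 ≤ r i ∧ r i < (s i : ℤ) := hr
    set Sf : ℕ → ℤ := fun i => if h : i < n then (s ⟨i, h⟩ : ℤ) else 1 with hSf
    set Rf : ℕ → ℤ := fun i => if h : i < n then r ⟨i, h⟩ else 0 with hRf
    have hS : ∀ i, 0 < Sf i := by
      intro i
      simp only [hSf]
      split
      · exact hsZ _
      · exact one_pos
    have hR : ∀ i, 0 ≤ Rf i ∧ Rf i < Sf i := by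
      intro i
      simp only [hSf, hRf]
      split
      · exact hrm _
      · exact ⟨le_refl 0, one_pos⟩
    have hSeq : ∀ i : Fin n, Sf (i : ℕ) = (s i : ℤ) := by
      intro i
      simp only [hSf]
      rw [dif_pos i.2, Fin.eta]
    have hReq : ∀ i : Fin n, Rf (i : ℕ) = r i := by
      intro i
      simp only [hRf]
      rw [dif_pos i.2, Fin.eta]
    set g : ℕ → ℤ := lhG Sf Rf with hg
    refine ⟨fun i => g (i : ℕ), ?_, ?_⟩
    · rw [Set.mem_setOf_eq, mem_lhPar_iff s hs]
      constructor
      · intro i h0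
        have hg0 : g (i : ℕ) = Rf 0 := by rw [h0]; rfl
        constructor
        · show 0 ≤ g (i : ℕ)
          rw [hg0]
          exact (hR 0).1
        · show g (i : ℕ) < (s i : ℤ)
          rw [hg0, ← hSeq i, h0]
          exact (hR 0).2
      · intro i h
        obtain ⟨ha, hb⟩ := lhG_chain Sf Rf hS (i : ℕ)
        rw [hSeq i] at ha hb
        have hse : Sf ((i : ℕ) + 1) = (s ⟨(i : ℕ) + 1, h⟩ : ℤ) := hSeq ⟨(i : ℕ) + 1, h⟩
        rw [hse] at ha hb
        exact ⟨ha, hb⟩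
    · funext i
      show g (i : ℕ) % (s i : ℤ) = r i
      rw [← hSeq i, ← hReq i]
      exact lhG_mod Sf Rf hR (i : ℕ)
end

section
/- Let s = (s_1,…,s_n) be a sequence of positive integers, let r = (r_1,…,r_n) with r_i ∈ {0,…,s_i−1} for each i, let k = (k_1,…,k_n) ∈ ℤ^n, and set x_i = k_i s_i + r_i. Then (x_1,…,x_n) ∈ Par_s if and only if k_1 = 0 and, for every i with 1 ≤ i ≤ n−1, k_{i+1} − k_i = 1 if i is an s-descent of r and k_{i+1} − k_i = 0 otherwise. -/
open Finset in
private lemma lh_sum_apply {n : ℕ} (s : Fin n → ℕ) (c : Fin n → ℝ) (i : Fin n) :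
    (∑ j, c j • lhVec s j) i = (∑ j ∈ univ.filter (· ≤ i), c j) * (s i : ℝ) := by
  rw [Finset.sum_apply, Finset.sum_mul, Finset.sum_filter]
  refine Finset.sum_congr rfl fun j _ => ?_
  simp only [Pi.smul_apply, smul_eq_mul, lhVec, mul_ite, mul_zero]

private lemma lh_filt0 {n : ℕ} (hn : 0 < n) :
    Finset.univ.filter (· ≤ (⟨0, hn⟩ : Fin n)) = {⟨0, hn⟩} := by
  ext j
  simp only [Finset.mem_filter, Finset.mem_univ, true_and, Finset.mem_singleton,
    Fin.le_def, Fin.ext_iff]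
  omega

private lemma lh_filtsucc {n m : ℕ} (h : m + 1 < n) :
    Finset.univ.filter (· ≤ (⟨m + 1, h⟩ : Fin n)) =
      insert ⟨m + 1, h⟩ (Finset.univ.filter (· ≤ (⟨m, by omega⟩ : Fin n))) := by
  ext j
  simp only [Finset.mem_filter, Finset.mem_univ, true_and, Finset.mem_insert,
    Fin.le_def, Fin.ext_iff]
  omega

private lemma lh_notmem {n m : ℕ} (h : m + 1 < n) (h' : m < n) :
    (⟨m + 1, h⟩ : Fin n) ∉ Finset.univ.filter (· ≤ (⟨m, h'⟩ : Fin n)) := by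
  simp [Fin.le_def]

private lemma lh_qr_lt (a c : ℤ) (b d : ℕ) (hb : 0 < b) (hd : 0 < d) :
    ((a : ℚ) / (b : ℚ) < (c : ℚ) / (d : ℚ)) ↔ ((a : ℝ) / (b : ℝ) < (c : ℝ) / (d : ℝ)) := by
  have hb1 : (0 : ℚ) < b := by exact_mod_cast hb
  have hd1 : (0 : ℚ) < d := by exact_mod_cast hd
  have hb2 : (0 : ℝ) < b := by exact_mod_cast hb
  have hd2 : (0 : ℝ) < d := by exact_mod_cast hd
  rw [div_lt_div_iff₀ hb1 hd1, div_lt_div_iff₀ hb2 hd2]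
  constructor <;> intro h <;> exact_mod_cast h

/-- with `x i = k i * s i + r i`, the point `x` lies in `Par_s` iff
`k 0 = 0` and `k (i+1) - k i` is `1` at `s`-descents of `r` and `0` otherwise. -/
theorem stmt_5 (n : ℕ) (hn : 0 < n) (s : Fin n → ℕ) (hs : ∀ i, 0 < s i)
    (r : Fin n → ℤ) (hr : r ∈ lhPsi s) (k : Fin n → ℤ) :
    ((fun i => ((k i * (s i : ℤ) + r i : ℤ) : ℝ)) ∈ lhPar s) ↔
      (k ⟨0, hn⟩ = 0 ∧ ∀ i : Fin n, ∀ h : (i : ℕ) + 1 < n,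
        k ⟨(i : ℕ) + 1, h⟩ - k i =
          if (r i : ℚ) / (s i : ℚ) > (r ⟨(i : ℕ) + 1, h⟩ : ℚ) / (s ⟨(i : ℕ) + 1, h⟩ : ℚ)
          then 1 else 0) := by
  have hspos : ∀ i, (0 : ℝ) < s i := fun i => by exact_mod_cast hs i
  have hr0 : ∀ i, (0 : ℝ) ≤ r i := fun i => by exact_mod_cast (hr i).1
  have hr1 : ∀ i, (r i : ℝ) < s i := fun i => by exact_mod_cast (hr i).2
  set y : Fin n → ℝ := fun i => (k i : ℝ) + (r i : ℝ) / (s i : ℝ) with hy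
  have hys : ∀ i, y i * s i = (k i : ℝ) * s i + r i := by
    intro i
    rw [hy]
    rw [add_mul, div_mul_cancel₀ _ (ne_of_gt (by exact_mod_cast hs i : (0:ℝ) < s i))]
  have hf0 : ∀ i, 0 ≤ (r i : ℝ) / (s i : ℝ) := fun i => div_nonneg (hr0 i) (hspos i).le
  have hf1 : ∀ i, (r i : ℝ) / (s i : ℝ) < 1 := fun i => (div_lt_one (hspos i)).mpr (hr1 i)
  have hdes : ∀ (i : Fin n) (h : (i : ℕ) + 1 < n),
      ((r i : ℚ) / (s i : ℚ) > (r ⟨(i : ℕ) + 1, h⟩ : ℚ) / (s ⟨(i : ℕ) + 1, h⟩ : ℚ)) ↔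
      ((r ⟨(i : ℕ) + 1, h⟩ : ℝ) / (s ⟨(i : ℕ) + 1, h⟩ : ℝ) < (r i : ℝ) / (s i : ℝ)) := by
    intro i h
    exact lh_qr_lt _ _ _ _ (hs _) (hs _)
  constructor
  · rintro ⟨c, hc, hx⟩
    have hC : ∀ i : Fin n, (∑ j ∈ Finset.univ.filter (· ≤ i), c j) = y i := by
      intro i
      have h1 := congrFun hx i
      rw [lh_sum_apply] at h1
      have h2 : (∑ j ∈ Finset.univ.filter (· ≤ i), c j) * (s i : ℝ) = y i * (s i : ℝ) := by
        rw [hys, ← h1]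
        push_cast
        ring
      exact mul_right_cancel₀ (hspos i).ne' h2
    have hkey0 : c ⟨0, hn⟩ = y ⟨0, hn⟩ := by
      have := hC ⟨0, hn⟩
      rwa [lh_filt0, Finset.sum_singleton] at this
    constructor
    · have hb := hc ⟨0, hn⟩
      rw [hkey0, hy] at hb
      have h1 : (-1 : ℝ) < (k ⟨0, hn⟩ : ℝ) := by
        have := hf1 ⟨0, hn⟩
        simp only at hb
        linarith [hb.1]
      have h2 : ((k ⟨0, hn⟩ : ℝ)) < 1 := by
        have := hf0 ⟨0, hn⟩
        simp only at hb
        linarith [hb.2]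
      have h1' : (-1 : ℤ) < k ⟨0, hn⟩ := by exact_mod_cast h1
      have h2' : k ⟨0, hn⟩ < 1 := by exact_mod_cast h2
      omega
    · intro i h
      have hm : (i : ℕ) < n := by omega
      have hcs : c ⟨(i : ℕ) + 1, h⟩ = y ⟨(i : ℕ) + 1, h⟩ - y ⟨(i : ℕ), hm⟩ := by
        have h1 := hC ⟨(i : ℕ) + 1, h⟩
        have h2 := hC ⟨(i : ℕ), hm⟩
        rw [lh_filtsucc h, Finset.sum_insert (lh_notmem h hm), h2] at h1
        linarith
      have hi : (⟨(i : ℕ), hm⟩ : Fin n) = i := by ext; rfl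
      rw [hi] at hcs
      have hb := hc ⟨(i : ℕ) + 1, h⟩
      rw [hcs, hy] at hb
      simp only at hb
      set d : ℤ := k ⟨(i : ℕ) + 1, h⟩ - k i with hd
      have hdr : (d : ℝ) = (k ⟨(i : ℕ) + 1, h⟩ : ℝ) - (k i : ℝ) := by push_cast [hd]; ring
      by_cases hcase : (r i : ℚ) / (s i : ℚ) > (r ⟨(i : ℕ) + 1, h⟩ : ℚ) / (s ⟨(i : ℕ) + 1, h⟩ : ℚ)
      · rw [if_pos hcase]
        have hlt := (hdes i h).mp hcase
        have h1 : (0 : ℝ) < (d : ℝ) := by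
          rw [hdr]
          linarith [hb.1]
        have h2 : (d : ℝ) < 2 := by
          rw [hdr]
          have := hf1 i
          have := hf0 ⟨(i : ℕ) + 1, h⟩
          linarith [hb.2]
        have h1' : (0 : ℤ) < d := by exact_mod_cast h1
        have h2' : d < 2 := by exact_mod_cast h2
        omega
      · rw [if_neg hcase]
        have hge : (r i : ℝ) / (s i : ℝ) ≤ (r ⟨(i : ℕ) + 1, h⟩ : ℝ) / (s ⟨(i : ℕ) + 1, h⟩ : ℝ) := by
          by_contra hcon
          exact hcase ((hdes i h).mpr (by linarith [lt_of_not_ge hcon]))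
        have h1 : (-1 : ℝ) < (d : ℝ) := by
          rw [hdr]
          have := hf0 i
          have := hf1 ⟨(i : ℕ) + 1, h⟩
          linarith [hb.1]
        have h2 : (d : ℝ) < 1 := by
          rw [hdr]
          linarith [hb.2]
        have h1' : (-1 : ℤ) < d := by exact_mod_cast h1
        have h2' : d < 1 := by exact_mod_cast h2
        omega
  · rintro ⟨hk0, hki⟩
    set c : Fin n → ℝ := fun i =>
      y i - (if h : 0 < (i : ℕ) then y ⟨(i : ℕ) - 1, by omega⟩ else 0) with hcdef
    refine ⟨c, ?_, ?_⟩
    · rintro ⟨m, hm⟩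
      cases m with
      | zero =>
        have : c ⟨0, hm⟩ = y ⟨0, hm⟩ := by simp [hcdef]
        rw [this, hy]
        simp only
        have hk0' : k ⟨0, hm⟩ = 0 := hk0
        rw [hk0']
        push_cast
        constructor
        · linarith [hf0 ⟨0, hm⟩]
        · linarith [hf1 ⟨0, hm⟩]
      | succ m =>
        have hm' : m < n := by omega
        have hcv : c ⟨m + 1, hm⟩ = y ⟨m + 1, hm⟩ - y ⟨m, hm'⟩ := by
          simp [hcdef]
        have hkd := hki ⟨m, hm'⟩ hm
        have hdr : (k ⟨m + 1, hm⟩ : ℝ) - (k ⟨m, hm'⟩ : ℝ) =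
            ((k ⟨m + 1, hm⟩ - k ⟨m, hm'⟩ : ℤ) : ℝ) := by push_cast; ring
        rw [hcv, hy]
        simp only
        by_cases hcase : (r ⟨m, hm'⟩ : ℚ) / (s ⟨m, hm'⟩ : ℚ) >
            (r ⟨m + 1, hm⟩ : ℚ) / (s ⟨m + 1, hm⟩ : ℚ)
        · have hlt := (hdes ⟨m, hm'⟩ hm).mp hcase
          rw [if_pos hcase] at hkd
          have hdr1 : (k ⟨m + 1, hm⟩ : ℝ) - (k ⟨m, hm'⟩ : ℝ) = 1 := by
            rw [hdr, hkd]; norm_num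
          constructor
          · linarith [hf1 ⟨m, hm'⟩, hf0 ⟨m + 1, hm⟩]
          · linarith
        · rw [if_neg hcase] at hkd
          have hge : (r ⟨m, hm'⟩ : ℝ) / (s ⟨m, hm'⟩ : ℝ) ≤
              (r ⟨m + 1, hm⟩ : ℝ) / (s ⟨m + 1, hm⟩ : ℝ) := by
            by_contra hcon
            exact hcase ((hdes ⟨m, hm'⟩ hm).mpr (lt_of_not_ge hcon))
          have hdr0 : (k ⟨m + 1, hm⟩ : ℝ) - (k ⟨m, hm'⟩ : ℝ) = 0 := by
            rw [hdr, hkd]; norm_num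
          constructor
          · linarith
          · linarith [hf1 ⟨m + 1, hm⟩, hf0 ⟨m, hm'⟩]
    · funext i
      rw [lh_sum_apply]
      have hC : ∀ m (hm : m < n), (∑ j ∈ Finset.univ.filter (· ≤ (⟨m, hm⟩ : Fin n)), c j) =
          y ⟨m, hm⟩ := by
        intro m
        induction m with
        | zero =>
          intro hm
          rw [lh_filt0, Finset.sum_singleton]
          simp [hcdef]
        | succ m ih =>
          intro hm
          have hm' : m < n := by omega
          rw [lh_filtsucc hm, Finset.sum_insert (lh_notmem hm hm'), ih hm']
          simp [hcdef]
      have := hC (i : ℕ) i.isLt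
      rw [Fin.eta] at this
      rw [this, hys]
      push_cast
      ring
end

section
/- Let s = (s_1,…,s_n) be a sequence of positive integers and s* = (s_1,…,s_n,1). For every nonnegative integer t, the number of lattice points λ ∈ ℤ^n satisfying 0 ≤ λ_1/s_1 ≤ ⋯ ≤ λ_n/s_n ≤ t equals Σ_{i=0}^{n} c_i · C(t+n−i, n), where c_i = #{ r ∈ Ψ_n : des_{s*}(r_1,…,r_n,0) = i } and C(·,·) is the binomial coefficient. (Equivalently, the δ-vector of the s-lecture hall polytope is given by counting s*-descents of sequences in Ψ_n × {0}.) -/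
lemma intCast_add_le_intCast_add_iff {α : Type*} [CommRing α] [LinearOrder α]
    [IsStrictOrderedRing α] {a b : ℤ} {x y : α} (hx : x ∈ Set.Ico 0 1) (hy : y ∈ Set.Ico 0 1) :
    (a : α) + x ≤ b + y ↔ a + (if y < x then 1 else 0) ≤ b := by
  obtain ⟨hx0, hx1⟩ := hx
  obtain ⟨hy0, hy1⟩ := hy
  split_ifs with h
  · constructor
    · intro hle
      have : (a : α) < b := by linarith
      exact_mod_cast this
    · intro hle
      have : (a : α) + 1 ≤ b := by exact_mod_cast hle
      linarith
  · rw [add_zero]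
    constructor
    · intro hle
      have : (a : α) < b + 1 := by linarith
      have : a < b + 1 := by exact_mod_cast this
      omega
    · intro hle
      have : (a : α) ≤ b := by exact_mod_cast hle
      linarith

lemma intCast_div_natCast_eq_ediv_add_emod (x : ℤ) {d : ℕ} (hd : 0 < d) :
    (x : ℚ) / d = ((x / d : ℤ) : ℚ) + ((x % d : ℤ) : ℚ) / d := by
  have hd' : (d : ℚ) ≠ 0 := by positivity
  conv_lhs => rw [← Int.mul_ediv_add_emod x d]
  push_cast
  field_simp

lemma Fin.strictMono_iff_monotone_sub_val {n : ℕ} {f : Fin n → ℤ} :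
    StrictMono f ↔ Monotone fun i => f i - i := by
  rcases n with _ | n
  · exact iff_of_true (fun i => i.elim0) (fun i => i.elim0)
  · rw [Fin.strictMono_iff_lt_succ, Fin.monotone_iff_le_succ]
    refine forall_congr' fun i => ?_
    simp only [Fin.val_succ, Fin.val_castSucc]
    omega

lemma Fin.monotone_snoc_iff {α : Type*} [Preorder α] {n : ℕ} {p : Fin n → α} {a : α} :
    Monotone (Fin.snoc p a : Fin (n + 1) → α) ↔ Monotone p ∧ ∀ i, p i ≤ a := by
  refine ⟨fun h => ⟨fun i j hij => ?_, fun i => ?_⟩, fun ⟨hp, ha⟩ i j hij => ?_⟩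
  · simpa using h (Fin.castSucc_le_castSucc_iff.mpr hij)
  · simpa using h (Fin.le_last (Fin.castSucc i))
  · induction j using Fin.lastCases with
    | last => induction i using Fin.lastCases with
      | last => exact le_rfl
      | cast i => simpa using ha i
    | cast j => induction i using Fin.lastCases with
      | last => exact absurd hij (not_le.mpr (Fin.castSucc_lt_last j))
      | cast i => simpa using hp (Fin.castSucc_le_castSucc_iff.mp hij)

lemma Fin.le_snoc_zero_and_monotone_snoc_iff {α : Type*} [Preorder α] {n : ℕ} {p : Fin n → α}
    {a b : α} (hab : n = 0 → a ≤ b) :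
    a ≤ (Fin.snoc p b : Fin (n + 1) → α) 0 ∧ Monotone (Fin.snoc p b : Fin (n + 1) → α) ↔
      Monotone p ∧ ∀ i, p i ∈ Set.Icc a b := by
  rw [Fin.monotone_snoc_iff]
  rcases n with _ | n
  · rw [show (0 : Fin 1) = Fin.last 0 from rfl, Fin.snoc_last]
    exact ⟨fun _ => ⟨fun i => i.elim0, fun i => i.elim0⟩,
      fun _ => ⟨hab rfl, fun i => i.elim0, fun i => i.elim0⟩⟩
  · rw [← Fin.castSucc_zero, Fin.snoc_castSucc]
    exact ⟨fun ⟨h0, hp, hb⟩ => ⟨hp, fun i => ⟨h0.trans (hp (Fin.zero_le i)), hb i⟩⟩,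
      fun ⟨hp, h⟩ => ⟨(h 0).1, hp, fun i => (h i).2⟩⟩

section StarsAndBars

lemma sub_val_mem_Icc_of_orderEmbedding {n : ℕ} {m : ℤ} (f : Fin n ↪o Set.Ico (0 : ℤ) (m + n))
    (i : Fin n) : (f i : ℤ) - i ∈ Set.Icc 0 m := by
  have hmono : Monotone fun i => (f i : ℤ) - i :=
    Fin.strictMono_iff_monotone_sub_val.mp fun _ _ h => f.strictMono h
  have hn := i.pos
  have hfirst := hmono (show (⟨0, hn⟩ : Fin n) ≤ i from Nat.zero_le _)
  have hlast := hmono (show i ≤ ⟨n - 1, by omega⟩ from Nat.le_sub_one_of_lt i.isLt)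
  have := (f ⟨0, hn⟩).2.1
  have := (f ⟨n - 1, by omega⟩).2.2
  dsimp only at hfirst hlast
  rw [Nat.cast_sub (show 1 ≤ n by omega)] at hlast
  constructor <;> omega

noncomputable def monotoneChainEquiv (n : ℕ) (m : ℤ) :
    {p : Fin n → ℤ // Monotone p ∧ ∀ i, p i ∈ Set.Icc 0 m} ≃
      (Fin n ↪o Set.Ico (0 : ℤ) (m + n)) where
  toFun p := OrderEmbedding.ofStrictMono
    (fun i => ⟨p.1 i + i, by
      have := p.2.2 i
      have := i.isLt
      simp only [Set.mem_Icc, Set.mem_Ico] at *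
      omega⟩)
    (fun i j hij => by
      have : (i : ℤ) < j := by exact_mod_cast hij
      have := p.2.1 hij.le
      show p.1 i + i < p.1 j + j
      omega)
  invFun f := ⟨fun i => f i - i,
    Fin.strictMono_iff_monotone_sub_val.mp fun _ _ h => f.strictMono h,
    sub_val_mem_Icc_of_orderEmbedding f⟩
  left_inv p := by ext i; simp [OrderEmbedding.ofStrictMono]
  right_inv f := by ext i; simp

instance (n : ℕ) (m : ℤ) : Finite {p : Fin n → ℤ // Monotone p ∧ ∀ i, p i ∈ Set.Icc 0 m} :=
  Finite.of_equiv _ (monotoneChainEquiv n m).symm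

lemma card_monotoneChain (n : ℕ) (m : ℤ) :
    Nat.card {p : Fin n → ℤ // Monotone p ∧ ∀ i, p i ∈ Set.Icc 0 m} =
      (m + n).toNat.choose n := by
  rw [Nat.card_congr ((monotoneChainEquiv n m).trans Set.powersetCard.ofFinEmbEquiv),
    Set.powersetCard.card, Nat.card_eq_fintype_card, Fintype.card_Ico, Int.card_Ico, sub_zero]

end StarsAndBars

section Descents

variable {N : ℕ} (s : Fin (N + 1) → ℕ) (r : Fin (N + 1) → ℤ)

lemma sDesLt_zero : sDesLt s r 0 = 0 := by
  simp [sDesLt]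

lemma sDesLt_succ (i : Fin N) :
    sDesLt s r i.succ = sDesLt s r i.castSucc +
      if (r i.succ : ℚ) / s i.succ < r i.castSucc / s i.castSucc then 1 else 0 := by
  have hset : {j : Fin (N + 1) | (j : ℕ) < i.succ ∧ ∃ h : (j : ℕ) + 1 < N + 1,
      (r j : ℚ) / s j > r ⟨j + 1, h⟩ / s ⟨j + 1, h⟩} =
      {j : Fin (N + 1) | (j : ℕ) < i.castSucc ∧ ∃ h : (j : ℕ) + 1 < N + 1,
        (r j : ℚ) / s j > r ⟨j + 1, h⟩ / s ⟨j + 1, h⟩} ∪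
      {j : Fin (N + 1) | j = i.castSucc ∧
        (r i.succ : ℚ) / s i.succ < r i.castSucc / s i.castSucc} := by
    ext j
    simp only [Set.mem_union, Set.mem_ofPred_eq, Fin.val_succ, Fin.val_castSucc]
    constructor
    · rintro ⟨hj, h, hd⟩
      rcases Nat.lt_succ_iff_lt_or_eq.mp hj with hj | hj
      · exact Or.inl ⟨hj, h, hd⟩
      · obtain rfl : j = i.castSucc := Fin.ext hj
        exact Or.inr ⟨rfl, hd⟩
    · rintro (⟨hj, h, hd⟩ | ⟨rfl, hd⟩)
      · exact ⟨by omega, h, hd⟩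
      · exact ⟨by simp, by simp, hd⟩
  rw [sDesLt, sDesLt, hset, Set.ncard_union_eq]
  · split_ifs with h <;> simp [h]
  · rw [Set.disjoint_left]
    rintro j ⟨hj, -⟩ ⟨rfl, -⟩
    exact lt_irrefl _ hj

lemma sDes_eq_sDesLt_last : sDes s r = sDesLt s r (Fin.last N) := by
  simp only [sDes, sDesLt, Fin.val_last]
  congr 1
  ext j
  simp only [Set.mem_ofPred_eq]
  exact ⟨fun ⟨h, hd⟩ => ⟨by omega, h, hd⟩, fun ⟨_, hd⟩ => hd⟩

lemma sDesLt_le (i : Fin (N + 1)) : sDesLt s r i ≤ i :=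
  calc sDesLt s r i ≤ (Set.Iio i).ncard := Set.ncard_le_ncard fun _ hj => hj.1
    _ = i := by rw [← Finset.coe_Iio, Set.ncard_coe_finset, Fin.card_Iio]

lemma sDes_le : sDes s r ≤ N :=
  (sDes_eq_sDesLt_last s r).trans_le (sDesLt_le s r _)

end Descents

section Ratios

def sRatio {N : ℕ} (s : Fin N → ℕ) (x : Fin N → ℤ) (i : Fin N) : ℚ := x i / s i

@[simp]
lemma sRatio_snoc_castSucc {N : ℕ} (s : Fin N → ℕ) (x : Fin N → ℤ) (a : ℕ) (b : ℤ)
    (i : Fin N) : sRatio (Fin.snoc s a) (Fin.snoc x b) i.castSucc = sRatio s x i := by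
  simp [sRatio]

@[simp]
lemma sRatio_snoc_last {N : ℕ} (s : Fin N → ℕ) (x : Fin N → ℤ) (a : ℕ) (b : ℤ) :
    sRatio (Fin.snoc s a) (Fin.snoc x b) (Fin.last N) = b / a := by
  simp [sRatio]

lemma sRatio_mem_Ico {N : ℕ} {s : Fin N → ℕ} {r : Fin N → ℤ} {i : Fin N}
    (hr : r i ∈ Set.Ico 0 (s i : ℤ)) : sRatio s r i ∈ Set.Ico 0 1 := by
  obtain ⟨h0, h1⟩ := hr
  have hs : (0 : ℚ) < s i := by exact_mod_cast h0.trans_lt h1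
  refine ⟨div_nonneg (by exact_mod_cast h0) hs.le, (div_lt_one hs).mpr ?_⟩
  exact_mod_cast h1

lemma monotone_add_sRatio_iff {N : ℕ} {s : Fin (N + 1) → ℕ} {r : Fin (N + 1) → ℤ}
    (hr : ∀ i, r i ∈ Set.Ico 0 (s i : ℤ)) (q : Fin (N + 1) → ℤ) :
    Monotone (fun i => (q i : ℚ) + sRatio s r i) ↔
      Monotone fun i => q i - (sDesLt s r i : ℤ) := by
  simp only [Fin.monotone_iff_le_succ]
  refine forall_congr' fun i => ?_
  rw [intCast_add_le_intCast_add_iff (sRatio_mem_Ico (hr _)) (sRatio_mem_Ico (hr _)),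
    sDesLt_succ, sRatio, sRatio]
  split_ifs <;> push_cast <;> omega

lemma inDilate_iff_monotone {n : ℕ} (s : Fin n → ℕ) (t : ℕ) (lam : Fin n → ℤ) :
    inDilate s t lam ↔ 0 ≤ sRatio (Fin.snoc s 1) (Fin.snoc lam (t : ℤ)) 0 ∧
      Monotone (sRatio (Fin.snoc s 1) (Fin.snoc lam (t : ℤ))) := by
  have hsucc (i : Fin n) : i.succ = if h : (i : ℕ) + 1 < n then Fin.castSucc ⟨i + 1, h⟩
      else Fin.last n := by
    split_ifs with h
    · rfl
    · exact Fin.ext (by simp; omega)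
  rw [Fin.monotone_iff_le_succ]
  unfold inDilate
  rcases n with _ | n
  · rw [show (0 : Fin 1) = Fin.last 0 from rfl, sRatio_snoc_last]
    simp
  refine and_congr ?_ ⟨fun ⟨hstep, hlast⟩ i => ?_, fun h => ⟨fun i hi => ?_, fun i hi => ?_⟩⟩
  · rw [← Fin.castSucc_zero, sRatio_snoc_castSucc]
    exact ⟨fun h => h 0 rfl, fun h i hi => (Fin.ext hi : i = 0) ▸ h⟩
  · rw [hsucc, sRatio_snoc_castSucc]
    split_ifs with h
    · rw [sRatio_snoc_castSucc]
      exact hstep i h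
    · rw [sRatio_snoc_last, Nat.cast_one, div_one, Int.cast_natCast]
      exact hlast i (by omega)
  · have := h i
    rwa [hsucc, dif_pos hi, sRatio_snoc_castSucc, sRatio_snoc_castSucc] at this
  · simpa [hsucc, show ¬ (i : ℕ) + 1 < n + 1 by omega, sRatio] using h i

end Ratios

section LatticePoints

variable {n : ℕ} (s : Fin n → ℕ)

noncomputable def lhResidue (lam : Fin n → ℤ) : Fin n → ℤ := fun i => lam i % s i

noncomputable def lhChain (lam : Fin n → ℤ) : Fin n → ℤ := fun i =>
  lam i / s i - sDesLt (Fin.snoc s 1) (Fin.snoc (lhResidue s lam) 0) i.castSucc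

noncomputable def lhOfResidueChain (r p : Fin n → ℤ) : Fin n → ℤ := fun i =>
  s i * (p i + sDesLt (Fin.snoc s 1) (Fin.snoc r 0) i.castSucc) + r i

noncomputable def lhPsiFinset : Finset (Fin n → ℤ) :=
  Fintype.piFinset fun i => Finset.Ico 0 (s i : ℤ)

variable {s}

lemma mem_lhPsiFinset {r : Fin n → ℤ} : r ∈ lhPsiFinset s ↔ r ∈ lhPsi s := by
  simp [lhPsiFinset, lhPsi]

lemma lhResidue_mem_lhPsi (hs : ∀ i, 0 < s i) (lam : Fin n → ℤ) :
    lhResidue s lam ∈ lhPsi s := fun i => by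
  have := hs i
  exact ⟨Int.emod_nonneg _ (by omega), Int.emod_lt_of_pos _ (by omega)⟩

lemma inDilate_iff_lhChain (hs : ∀ i, 0 < s i) (t : ℕ) (lam : Fin n → ℤ) :
    inDilate s t lam ↔ Monotone (lhChain s lam) ∧ ∀ i, lhChain s lam i ∈
      Set.Icc 0 ((t : ℤ) - sDes (Fin.snoc s 1) (Fin.snoc (lhResidue s lam) 0)) := by
  set r : Fin (n + 1) → ℤ := Fin.snoc (lhResidue s lam) 0
  set q : Fin (n + 1) → ℤ := Fin.snoc (fun i => lam i / s i) t
  have hr : ∀ i, r i ∈ Set.Ico 0 ((Fin.snoc s 1 : Fin (n + 1) → ℕ) i : ℤ) := by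
    intro i
    induction i using Fin.lastCases with
    | last => simp [r]
    | cast i => simpa [r] using lhResidue_mem_lhPsi hs lam i
  have hsplit : sRatio (Fin.snoc s 1) (Fin.snoc lam (t : ℤ)) =
      fun i => (q i : ℚ) + sRatio (Fin.snoc s 1) r i := by
    funext i
    induction i using Fin.lastCases with
    | last => simp only [q, r, sRatio_snoc_last]; simp
    | cast i =>
      simp only [q, r, Fin.snoc_castSucc, sRatio, lhResidue]
      exact intCast_div_natCast_eq_ediv_add_emod _ (hs i)
  have hchain : (fun i => q i - (sDesLt (Fin.snoc s 1) r i : ℤ)) =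
      Fin.snoc (lhChain s lam) ((t : ℤ) - sDes (Fin.snoc s 1) r) := by
    funext i
    induction i using Fin.lastCases with
    | last => simp [q, sDes_eq_sDesLt_last]
    | cast i => simp [q, r, lhChain]
  have hfirst : (0 : ℚ) ≤ q 0 + sRatio (Fin.snoc s 1) r 0 ↔ 0 ≤ q 0 := by
    simpa [(sRatio_mem_Ico (hr 0)).1.not_gt] using intCast_add_le_intCast_add_iff (a := 0)
      (b := q 0) (Set.left_mem_Ico.mpr zero_lt_one) (sRatio_mem_Ico (hr 0))
  have hq0 : q 0 = (Fin.snoc (lhChain s lam) ((t : ℤ) - sDes (Fin.snoc s 1) r) :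
      Fin (n + 1) → ℤ) 0 := by
    simpa [sDesLt_zero] using congrFun hchain 0
  have hdes := sDes_le (Fin.snoc s 1) r
  rw [inDilate_iff_monotone, hsplit, monotone_add_sRatio_iff hr, hchain, hfirst, hq0,
    Fin.le_snoc_zero_and_monotone_snoc_iff (by omega)]

lemma lhResidue_lhOfResidueChain {r : Fin n → ℤ} (hr : r ∈ lhPsi s) (p : Fin n → ℤ) :
    lhResidue s (lhOfResidueChain s r p) = r := by
  funext i
  simp only [lhResidue, lhOfResidueChain, Int.mul_add_emod_self_left]
  exact Int.emod_eq_of_lt (hr i).1 (hr i).2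

lemma lhChain_lhOfResidueChain {r : Fin n → ℤ} (hr : r ∈ lhPsi s) (p : Fin n → ℤ) :
    lhChain s (lhOfResidueChain s r p) = p := by
  funext i
  have hs : (s i : ℤ) ≠ 0 := by have := hr i; omega
  rw [lhChain, lhResidue_lhOfResidueChain hr, lhOfResidueChain, Int.mul_add_ediv_left _ _ hs,
    Int.ediv_eq_zero_of_lt (hr i).1 (hr i).2]
  ring

lemma lhResidue_lhChain_injective :
    Function.Injective fun lam => (lhResidue s lam, lhChain s lam) := by
  intro lam mu h
  obtain ⟨hres, hchain⟩ := Prod.mk.injEq _ _ _ _ ▸ h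
  funext i
  have hq : lam i / s i = mu i / s i := by
    have := congrFun hchain i
    simp only [lhChain, hres] at this
    omega
  rw [← Int.mul_ediv_add_emod (lam i) (s i), ← Int.mul_ediv_add_emod (mu i) (s i), hq,
    show lam i % s i = mu i % s i from congrFun hres i]

lemma ncard_inDilate_eq_sum_choose (hs : ∀ i, 0 < s i) (t : ℕ) :
    {lam | inDilate s t lam}.ncard =
      ∑ r ∈ lhPsiFinset s, (t + n - sDes (Fin.snoc s 1) (Fin.snoc r 0)).choose n := by
  let Φ (lam : {lam | inDilate s t lam}) : Σ r : lhPsiFinset s, {p : Fin n → ℤ //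
      Monotone p ∧ ∀ i, p i ∈ Set.Icc 0 ((t : ℤ) - sDes (Fin.snoc s 1) (Fin.snoc r.1 0))} :=
    ⟨⟨lhResidue s lam, mem_lhPsiFinset.mpr (lhResidue_mem_lhPsi hs lam)⟩,
      ⟨lhChain s lam, (inDilate_iff_lhChain hs t lam).mp lam.2⟩⟩
  have hΦ : Φ.Bijective := by
    refine ⟨fun lam mu h => Subtype.ext (lhResidue_lhChain_injective
      (Prod.ext (congrArg (fun x => x.1.1) h) (congrArg (fun x => x.2.1) h))), ?_⟩
    rintro ⟨⟨r, hr⟩, ⟨p, hp⟩⟩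
    rw [mem_lhPsiFinset] at hr
    have hlam : inDilate s t (lhOfResidueChain s r p) := by
      rwa [inDilate_iff_lhChain hs, lhChain_lhOfResidueChain hr, lhResidue_lhOfResidueChain hr]
    exact ⟨⟨_, hlam⟩, Sigma.subtype_ext (Subtype.ext (lhResidue_lhOfResidueChain hr p))
      (lhChain_lhOfResidueChain hr p)⟩
  rw [← Nat.card_coe_set_eq, Nat.card_eq_of_bijective Φ hΦ, Nat.card_sigma,
    ← Finset.sum_coe_sort (lhPsiFinset s)]
  refine Fintype.sum_congr _ _ fun r => ?_
  have := sDes_le (Fin.snoc s 1) (Fin.snoc r.1 0)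
  rw [card_monotoneChain]
  congr 1
  omega

end LatticePoints

/-- Ehrhart of `P_s` via `s*`-descents: the number of lattice points in
the `t`-th dilate of `P_s` equals `∑_{i=0}^n c_i · C(t+n-i,n)` with
`c_i = #{r ∈ Ψ_n : des_{s*}(r,0) = i}`. -/
theorem stmt_9 (n : ℕ) (s : Fin n → ℕ) (hs : ∀ i, 0 < s i) (t : ℕ) :
    Set.ncard {lam : Fin n → ℤ | inDilate s t lam} =
      ∑ i ∈ Finset.range (n + 1),
        Set.ncard {r ∈ lhPsi s | sDes (Fin.snoc s 1) (Fin.snoc r (0 : ℤ)) = i} *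
          Nat.choose (t + n - i) n := by
  have hfiber (i : ℕ) : {r ∈ lhPsi s | sDes (Fin.snoc s 1) (Fin.snoc r (0 : ℤ)) = i}.ncard =
      ((lhPsiFinset s).filter fun r => sDes (Fin.snoc s 1) (Fin.snoc r 0) = i).card := by
    simp only [← Set.ncard_coe_finset, Finset.coe_filter, mem_lhPsiFinset]
  rw [ncard_inDilate_eq_sum_choose hs, ← Finset.sum_fiberwise_of_maps_to
    (t := Finset.range (n + 1)) fun r _ => Finset.mem_range_succ_iff.mpr (sDes_le _ _)]
  refine Finset.sum_congr rfl fun i _ => ?_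
  rw [hfiber, Finset.sum_const_nat fun r hr => by rw [(Finset.mem_filter.mp hr).2]]
end
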